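/- arXiv:1709.07737 — 6 statements merged into one kernel-verified Lean document; each statement's English description precedes it below -/
import Mathlib

section
/- Let p > 0 and let h : (0,∞) → ℝ be continuous and positive with ∫_0^1 h(y) dy < ∞ and lim_{y→∞} h(y) = h_∞ > 0. Then the function ξ_p(y) = (p + y) ∫_y^∞ p h(y')/(p + y')² dy' is well defined and continuously differentiable on (0,∞), it satisfies −h(y) − ξ_p'(y) + (1/p)[ξ_p(y) − y ξ_p'(y)] = 0 for every y > 0, and lim_{y→∞} ξ_p(y) = p h_∞. -/
open MeasureTheory Real Filter Set
open scoped Topology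

/-!
With `F y = ∫_y^∞ p h/(p+x)²` we have `ξ_p = (p + y) F` and `F' = -p h/(p+y)²`, from which the
equation is pure algebra. Since `∫_y^∞ (p+x)⁻² dx = (p+y)⁻¹`, `ξ_p(y)/p` is the average of `h`
over `(y, ∞)` against the probability weight `(p+y)/(p+x)²`, so it tends to `h_∞`; the same
weight, with `h` bounded near infinity, gives integrability.
-/

section InverseSquare

variable {p a : ℝ}

lemma hasDerivAt_neg_inv_add {x : ℝ} (hx : p + x ≠ 0) :
    HasDerivAt (fun t => -(p + t)⁻¹) ((p + x) ^ 2)⁻¹ x :=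
  (((hasDerivAt_id x).const_add p).inv hx).neg.congr_deriv (by rw [neg_div, neg_neg, one_div, id])

lemma tendsto_neg_inv_add_atTop : Tendsto (fun t : ℝ => -(p + t)⁻¹) atTop (𝓝 0) := by
  simpa using (tendsto_atTop_add_const_left _ p tendsto_id).inv_tendsto_atTop.neg

lemma integrableOn_Ioi_inv_add_sq (ha : 0 < p + a) :
    IntegrableOn (fun x => ((p + x) ^ 2)⁻¹) (Ioi a) :=
  integrableOn_Ioi_deriv_of_nonneg'
    (fun x hx => hasDerivAt_neg_inv_add (by linarith [mem_Ici.1 hx]))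
    (fun x _ => by positivity) tendsto_neg_inv_add_atTop

lemma integral_Ioi_inv_add_sq (ha : 0 < p + a) :
    ∫ x in Ioi a, ((p + x) ^ 2)⁻¹ = (p + a)⁻¹ := by
  simpa using integral_Ioi_of_hasDerivAt_of_tendsto'
    (fun x hx => hasDerivAt_neg_inv_add (by linarith [mem_Ici.1 hx]))
    (integrableOn_Ioi_inv_add_sq ha) tendsto_neg_inv_add_atTop

end InverseSquare

lemma hasDerivAt_integral_Ioi {E : Type*} [NormedAddCommGroup E] [NormedSpace ℝ E]
    [CompleteSpace E] {g : ℝ → E} {c y : ℝ} (hcy : c < y) (hg : IntegrableOn g (Ioi c))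
    (hgc : ContinuousOn g (Ioi c)) :
    HasDerivAt (fun x => ∫ t in Ioi x, g t) (-g y) y := by
  have hsplit : ∀ x ∈ Ioi c, ∫ t in Ioi x, g t = (∫ t in Ioi c, g t) - ∫ t in c..x, g t :=
    fun x hx => by rw [← intervalIntegral.integral_Ioi_sub_Ioi hg (le_of_lt hx), sub_sub_cancel]
  have hprim : HasDerivAt (fun x => ∫ t in c..x, g t) (g y) y :=
    intervalIntegral.integral_hasDerivAt_right
      ((intervalIntegrable_iff_integrableOn_Ioc_of_le hcy.le).2 (hg.mono_set Ioc_subset_Ioi_self))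
      (hgc.stronglyMeasurableAtFilter isOpen_Ioi y hcy) (hgc.continuousAt (Ioi_mem_nhds hcy))
  simpa using ((hasDerivAt_const y _).sub hprim).congr_of_eventuallyEq
    (eventuallyEq_of_mem (Ioi_mem_nhds hcy) hsplit)

section Profile

variable {p : ℝ} {h : ℝ → ℝ}

lemma integrableOn_Ioi_mul_div_add_sq {a L : ℝ} (ha : 0 < p + a) (hcont : ContinuousOn h (Ici a))
    (hlim : Tendsto h atTop (𝓝 L)) :
    IntegrableOn (fun x => p * h x / (p + x) ^ 2) (Ioi a) := by
  have hbigO : (fun x => p * h x / (p + x) ^ 2) =O[atTop] fun x => ((p + x) ^ 2)⁻¹ := by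
    simpa [div_eq_mul_inv, mul_assoc] using ((hlim.isBigO_one ℝ).mul
      (Asymptotics.isBigO_refl (fun x => ((p + x) ^ 2)⁻¹) atTop)).const_mul_left p
  refine (LocallyIntegrableOn.integrableOn_of_isBigO_atTop ?_ hbigO
    ⟨Ioi a, Ioi_mem_atTop a, integrableOn_Ioi_inv_add_sq ha⟩).mono_set Ioi_subset_Ici_self
  refine ContinuousOn.locallyIntegrableOn ?_ measurableSet_Ici
  exact (continuousOn_const.mul hcont).div (by fun_prop) fun x hx => by
    nlinarith [mem_Ici.1 hx]

lemma abs_add_mul_integral_Ioi_sub_le {y L ε : ℝ} (hy : 0 < p + y)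
    (hint : IntegrableOn (fun x => p * h x / (p + x) ^ 2) (Ioi y))
    (hε : ∀ x > y, |h x - L| ≤ ε) :
    |(p + y) * (∫ x in Ioi y, p * h x / (p + x) ^ 2) - p * L| ≤ |p| * ε := by
  have hw := integrableOn_Ioi_inv_add_sq hy
  have hw_int := integral_Ioi_inv_add_sq hy
  have hdiff : (p + y) * (∫ x in Ioi y, p * h x / (p + x) ^ 2) - p * L =
      (p + y) * ∫ x in Ioi y, (p * h x / (p + x) ^ 2 - p * L * ((p + x) ^ 2)⁻¹) := by
    rw [integral_sub hint (hw.const_mul _), integral_const_mul, hw_int]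
    field_simp
  have hbound : ‖∫ x in Ioi y, (p * h x / (p + x) ^ 2 - p * L * ((p + x) ^ 2)⁻¹)‖ ≤
      ∫ x in Ioi y, |p| * ε * ((p + x) ^ 2)⁻¹ := by
    refine norm_integral_le_of_norm_le (hw.const_mul _) ?_
    refine (ae_restrict_iff' measurableSet_Ioi).2 (ae_of_all _ fun x hx => ?_)
    have hpx : 0 < p + x := by linarith [mem_Ioi.1 hx]
    rw [Real.norm_eq_abs, show p * h x / (p + x) ^ 2 - p * L * ((p + x) ^ 2)⁻¹ =
      p * (h x - L) * ((p + x) ^ 2)⁻¹ by ring, abs_mul, abs_mul,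
      abs_of_pos (by positivity : 0 < ((p + x) ^ 2)⁻¹)]
    gcongr
    exact hε x hx
  rw [integral_const_mul, hw_int] at hbound
  rw [hdiff, abs_mul, abs_of_pos hy]
  calc (p + y) * |∫ x in Ioi y, (p * h x / (p + x) ^ 2 - p * L * ((p + x) ^ 2)⁻¹)|
      ≤ (p + y) * (|p| * ε * (p + y)⁻¹) := by gcongr; exact hbound
    _ = |p| * ε := by field_simp

lemma tendsto_add_mul_integral_Ioi {L : ℝ}
    (hint : ∀ᶠ y in atTop, IntegrableOn (fun x => p * h x / (p + x) ^ 2) (Ioi y))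
    (hlim : Tendsto h atTop (𝓝 L)) :
    Tendsto (fun y => (p + y) * ∫ x in Ioi y, p * h x / (p + x) ^ 2) atTop (𝓝 (p * L)) := by
  refine Metric.tendsto_nhds.2 fun ε hε => ?_
  have hδ : 0 < ε / (|p| + 1) := by positivity
  obtain ⟨M, hM⟩ := eventually_atTop.1 (Metric.tendsto_nhds.1 hlim _ hδ)
  filter_upwards [hint, eventually_gt_atTop M, eventually_gt_atTop (-p)] with y hy_int hyM hyp
  rw [Real.dist_eq]
  calc _ ≤ |p| * (ε / (|p| + 1)) :=
        abs_add_mul_integral_Ioi_sub_le (by linarith) hy_int fun x hx =>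
          (hM x (by linarith)).le
    _ < ε := by
        rw [mul_div_assoc', div_lt_iff₀ (by positivity)]
        nlinarith

end Profile

theorem stmt_0_general (p hinf : ℝ) (hp : 0 < p) (h : ℝ → ℝ)
    (hcont : ContinuousOn h (Set.Ioi (0:ℝ)))
    (hlim : Tendsto h atTop (nhds hinf))
    (ξp : ℝ → ℝ)
    (hξp : ∀ y, ξp y = (p + y) * ∫ y' in Set.Ioi y, p * h y' / (p + y') ^ 2) :
    (∀ y > (0:ℝ), IntegrableOn (fun y' => p * h y' / (p + y') ^ 2) (Set.Ioi y)) ∧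
    (∀ y > (0:ℝ), DifferentiableAt ℝ ξp y) ∧
    ContinuousOn (deriv ξp) (Set.Ioi 0) ∧
    (∀ y > (0:ℝ), -h y - deriv ξp y + (1 / p) * (ξp y - y * deriv ξp y) = 0) ∧
    Tendsto ξp atTop (nhds (p * hinf)) := by
  set g : ℝ → ℝ := fun y' => p * h y' / (p + y') ^ 2
  have hg_cont : ContinuousOn g (Ioi 0) :=
    (continuousOn_const.mul hcont).div (by fun_prop) fun x hx => by
      nlinarith [mem_Ioi.1 hx]
  have hg_int : ∀ y > (0:ℝ), IntegrableOn g (Ioi y) := fun y hy =>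
    integrableOn_Ioi_mul_div_add_sq (by linarith) (hcont.mono (Ici_subset_Ioi.2 hy)) hlim
  have hξ : ξp = fun y => (p + y) * ∫ t in Ioi y, g t := funext hξp
  have hF : ∀ y > (0:ℝ), HasDerivAt (fun x => ∫ t in Ioi x, g t) (-g y) y := fun y hy =>
    hasDerivAt_integral_Ioi (half_lt_self hy) (hg_int _ (half_pos hy))
      (hg_cont.mono (Ioi_subset_Ioi (half_pos hy).le))
  have hderiv : ∀ y > (0:ℝ), HasDerivAt ξp ((∫ t in Ioi y, g t) - (p + y) * g y) y :=
    fun y hy => hξ ▸ (((hasDerivAt_id y).const_add p).mul (hF y hy)).congr_deriv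
      (by simp only [id, one_mul]; ring)
  refine ⟨hg_int, fun y hy => (hderiv y hy).differentiableAt, ?_, fun y hy => ?_,
    hξ ▸ tendsto_add_mul_integral_Ioi (eventually_gt_atTop 0 |>.mono hg_int) hlim⟩
  · have hF_cont : ContinuousOn (fun y => ∫ t in Ioi y, g t) (Ioi 0) := fun y hy =>
      (hF y hy).continuousAt.continuousWithinAt
    exact (hF_cont.sub ((continuous_const.add continuous_id).continuousOn.mul hg_cont)).congr
      fun y hy => (hderiv y hy).deriv
  · have : p + y ≠ 0 := by linarith
    rw [(hderiv y hy).deriv, hξp y]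
    simp only [g]
    field_simp
    ring

/-- well-definedness, C¹ regularity, the ODE, and the limit at infinity
for the equilibrium profile ξ_p(y) = (p+y)∫_y^∞ p h(y')/(p+y')² dy'. -/
theorem stmt_0 (p hinf : ℝ) (hp : 0 < p) (h : ℝ → ℝ)
    (hcont : ContinuousOn h (Set.Ioi (0:ℝ)))
    (hpos : ∀ y > (0:ℝ), 0 < h y)
    (hint : IntegrableOn h (Set.Ioo (0:ℝ) 1))
    (hlim : Tendsto h atTop (nhds hinf))
    (hinfpos : 0 < hinf)
    (ξp : ℝ → ℝ)
    (hξp : ∀ y, ξp y = (p + y) * ∫ y' in Set.Ioi y, p * h y' / (p + y') ^ 2) :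
    (∀ y > (0:ℝ), IntegrableOn (fun y' => p * h y' / (p + y') ^ 2) (Set.Ioi y)) ∧
    (∀ y > (0:ℝ), DifferentiableAt ℝ ξp y) ∧
    ContinuousOn (deriv ξp) (Set.Ioi 0) ∧
    (∀ y > (0:ℝ), -h y - deriv ξp y + (1 / p) * (ξp y - y * deriv ξp y) = 0) ∧
    Tendsto ξp atTop (nhds (p * hinf)) :=
  stmt_0_general p hinf hp h hcont hlim ξp hξp
end

section
/- Let p > 0 and let K : [0,∞) → ℝ be a function such that t ↦ e^{t/p} K(t) is positive and nonincreasing on [0,∞). Then for every complex number z with Re z > −1/p the Laplace transform K̂(z) = ∫_0^∞ K(t) e^{−z t} dt converges absolutely, and 1 + K̂(z) ≠ 0. (Indeed Im K̂(z) ≠ 0 whenever Im z ≠ 0 and Re z > −1/p, while K̂(z) > 0 for real z > −1/p.) -/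
/-!
Write `K t * exp (-x t) = exp (-(x + 1/p) t) * g t` with `g t = exp (t/p) * K t`. For
`x > -1/p` this is positive, strictly decreasing and dominated by `g 0 * exp (-(x + 1/p) t)`,
which gives absolute convergence and `K̂ x > 0`. For `z = x + iy`,
`Im K̂ z = -∫ f t * sin (y t)` with `f` strictly decreasing; after rescaling to `y = 1`, pairing
each positive half-period of `sin` with the following negative one shows that this integral has
the sign of `y`. So `1 + K̂ z` has nonzero imaginary part off the real axis and real part `> 1`
on it.
-/

open MeasureTheory Real Filter Set

section SinIntegral

variable {f : ℝ → ℝ}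

lemma integral_mul_sin_zero_two_pi (hf : IntervalIntegrable f volume 0 π)
    (hf' : IntervalIntegrable (fun t => f (t + π)) volume 0 π) :
    ∫ t in (0)..2 * π, f t * sin t = ∫ t in (0)..π, (f t - f (t + π)) * sin t := by
  have hF := hf.mul_continuousOn continuous_sin.continuousOn
  have hF' := hf'.mul_continuousOn continuous_sin.continuousOn
  have hshift :=
    intervalIntegral.integral_comp_add_right (fun t => f t * sin t) π (a := 0) (b := π)
  simp only [sin_add_pi, zero_add, ← two_mul, mul_neg] at hshift
  have hF₂ : IntervalIntegrable (fun t => f t * sin t) volume π (2 * π) := by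
    simpa [two_mul, sin_add_pi] using hF'.neg.comp_sub_right π
  rw [← intervalIntegral.integral_add_adjacent_intervals hF hF₂, ← hshift,
    intervalIntegral.integral_neg, ← sub_eq_add_neg, ← intervalIntegral.integral_sub hF hF']
  simp only [sub_mul]

lemma integral_mul_sin_zero_two_pi_pos (hf : StrictAntiOn f (Icc 0 (2 * π))) :
    0 < ∫ t in (0)..2 * π, f t * sin t := by
  have hsub : Icc 0 π ⊆ Icc 0 (2 * π) := Icc_subset_Icc_right (by linarith [pi_pos])
  have hshift : StrictAntiOn (fun t => f (t + π)) (Icc 0 π) := fun s hs t ht hst =>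
    hf ⟨by linarith [hs.1, pi_pos], by linarith [hs.2]⟩
      ⟨by linarith [ht.1, pi_pos], by linarith [ht.2]⟩ (by linarith)
  have hf₁ : IntervalIntegrable f volume 0 π :=
    (hf.antitoneOn.mono (by simpa [uIcc_of_le pi_pos.le] using hsub)).intervalIntegrable
  have hf₂ : IntervalIntegrable (fun t => f (t + π)) volume 0 π :=
    (hshift.antitoneOn.mono (by simp [uIcc_of_le pi_pos.le])).intervalIntegrable
  rw [integral_mul_sin_zero_two_pi hf₁ hf₂]
  refine intervalIntegral.intervalIntegral_pos_of_pos_on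
    ((hf₁.sub hf₂).mul_continuousOn continuous_sin.continuousOn) (fun t ht => ?_) pi_pos
  have hdrop : f (t + π) < f t :=
    hf (hsub (Ioo_subset_Icc_self ht)) ⟨by linarith [ht.1, pi_pos], by linarith [ht.2]⟩
      (by linarith [pi_pos])
  exact mul_pos (sub_pos.2 hdrop) (sin_pos_of_pos_of_lt_pi ht.1 ht.2)

lemma integral_Ioi_mul_sin_pos (hf : IntegrableOn f (Ioi 0)) (hanti : StrictAntiOn f (Ici 0)) :
    0 < ∫ t in Ioi 0, f t * sin t := by
  set a : ℕ → ℝ := fun k => k * (2 * π) with ha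
  have ha_nonneg : ∀ k, 0 ≤ a k := fun k => by positivity
  have hblock_pos : ∀ k, 0 < ∫ t in a k..a (k + 1), f t * sin t := fun k => by
    have hshift := intervalIntegral.integral_comp_add_right (fun t => f t * sin t) (a k)
      (a := 0) (b := 2 * π)
    simp only [sin_add_nat_mul_two_pi, zero_add, ha] at hshift
    show 0 < ∫ t in (k : ℝ) * (2 * π)..((k + 1 : ℕ) : ℝ) * (2 * π), f t * sin t
    rw [show ((k + 1 : ℕ) : ℝ) * (2 * π) = 2 * π + k * (2 * π) by push_cast; ring,
      ← hshift]
    refine integral_mul_sin_zero_two_pi_pos fun s hs t ht hst => hanti ?_ ?_ (by linarith)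
    · exact add_nonneg hs.1 (ha_nonneg k)
    · exact add_nonneg ht.1 (ha_nonneg k)
  have hF : IntegrableOn (fun t => f t * sin t) (Ioi 0) :=
    hf.mul_bdd continuous_sin.aestronglyMeasurable (ae_of_all _ fun t => abs_sin_le_one t)
  have hlim : Tendsto (fun n => ∫ t in a 0..a n, f t * sin t) atTop
      (nhds (∫ t in Ioi 0, f t * sin t)) := by
    simpa [ha] using intervalIntegral_tendsto_integral_Ioi 0 hF
      (tendsto_natCast_atTop_atTop.atTop_mul_const (by positivity : (0 : ℝ) < 2 * π))
  refine (hblock_pos 0).trans_le (ge_of_tendsto hlim (eventually_atTop.2 ⟨1, fun n hn => ?_⟩))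
  rw [← intervalIntegral.sum_integral_adjacent_intervals (n := n) fun k _ => ?_]
  · exact Finset.single_le_sum (fun k _ => (hblock_pos k).le) (Finset.mem_range.2 hn)
  · refine (hanti.antitoneOn.mono ?_).intervalIntegrable.mul_continuousOn
      continuous_sin.continuousOn
    rw [uIcc_of_le (by simp only [ha]; push_cast; nlinarith [pi_pos])]
    exact Icc_subset_Ici_self.trans (Ici_subset_Ici.2 (ha_nonneg k))

lemma integral_Ioi_mul_sin_mul_pos (hf : IntegrableOn f (Ioi 0)) (hanti : StrictAntiOn f (Ici 0))
    {y : ℝ} (hy : 0 < y) : 0 < ∫ t in Ioi 0, f t * sin (y * t) := by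
  have hscaled : 0 < ∫ s in Ioi 0, f (y⁻¹ * s) * sin s := by
    refine integral_Ioi_mul_sin_pos ?_ fun s hs t ht hst => hanti ?_ ?_ ?_
    · rwa [integrableOn_Ioi_comp_mul_left_iff f 0 (inv_pos.2 hy), mul_zero]
    · exact mul_nonneg (inv_nonneg.2 hy.le) hs
    · exact mul_nonneg (inv_nonneg.2 hy.le) ht
    · exact mul_lt_mul_of_pos_left hst (inv_pos.2 hy)
  have hsubst := integral_comp_mul_left_Ioi (fun s => f (y⁻¹ * s) * sin s) 0 hy
  simp only [inv_mul_cancel_left₀ hy.ne', mul_zero, smul_eq_mul] at hsubst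
  rw [hsubst]
  exact mul_pos (inv_pos.2 hy) hscaled

lemma integral_Ioi_mul_sin_mul_ne_zero (hf : IntegrableOn f (Ioi 0))
    (hanti : StrictAntiOn f (Ici 0)) {y : ℝ} (hy : y ≠ 0) :
    ∫ t in Ioi 0, f t * sin (y * t) ≠ 0 := by
  rcases hy.lt_or_gt with hy | hy
  · have := integral_Ioi_mul_sin_mul_pos hf hanti (neg_pos.2 hy)
    simp only [neg_mul, sin_neg, mul_neg, integral_neg] at this
    linarith
  · exact (integral_Ioi_mul_sin_mul_pos hf hanti hy).ne'

end SinIntegral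

lemma norm_ofReal_mul_cexp_neg_mul (a : ℝ) (z : ℂ) (t : ℝ) :
    ‖(a : ℂ) * Complex.exp (-z * t)‖ = |a| * rexp (-z.re * t) := by
  simp [Complex.norm_exp, Complex.mul_re]

lemma re_ofReal_mul_cexp_neg_mul (a : ℝ) (z : ℂ) (t : ℝ) :
    ((a : ℂ) * Complex.exp (-z * t)).re = a * rexp (-z.re * t) * cos (z.im * t) := by
  simp [Complex.exp_re, Complex.mul_re, Complex.mul_im, mul_assoc]

lemma im_ofReal_mul_cexp_neg_mul (a : ℝ) (z : ℂ) (t : ℝ) :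
    ((a : ℂ) * Complex.exp (-z * t)).im = -(a * rexp (-z.re * t) * sin (z.im * t)) := by
  simp [Complex.exp_im, Complex.mul_re, Complex.mul_im, mul_assoc]

lemma mul_exp_neg_mul_eq (a p x t : ℝ) :
    a * rexp (-x * t) = rexp (-(x + 1 / p) * t) * (rexp (t / p) * a) := by
  rw [← mul_assoc, ← exp_add]
  ring_nf

section Laplace

variable {p : ℝ} {K : ℝ → ℝ}

lemma aemeasurable_of_antitoneOn_exp_div_mul
    (hKmono : AntitoneOn (fun t => rexp (t / p) * K t) (Ici 0)) :
    AEMeasurable K (volume.restrict (Ioi 0)) := by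
  have hg := aemeasurable_restrict_of_antitoneOn (μ := volume) measurableSet_Ioi
    (hKmono.mono Ioi_subset_Ici_self)
  have hexp : Measurable fun t : ℝ => rexp (-(t / p)) := by fun_prop
  refine (hexp.aemeasurable.mul hg).congr (ae_of_all _ fun t => ?_)
  simp only [Pi.mul_apply, ← mul_assoc, ← exp_add, neg_add_cancel, exp_zero, one_mul]

lemma strictAntiOn_mul_exp_neg_mul (hKpos : ∀ t ≥ (0:ℝ), 0 < rexp (t / p) * K t)
    (hKmono : AntitoneOn (fun t => rexp (t / p) * K t) (Ici 0)) {x : ℝ} (hx : -1 / p < x) :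
    StrictAntiOn (fun t => K t * rexp (-x * t)) (Ici 0) := by
  intro s hs t ht hst
  have hε : 0 < x + 1 / p := by rw [neg_div] at hx; linarith
  simp only [mul_exp_neg_mul_eq _ p x]
  calc rexp (-(x + 1 / p) * t) * (rexp (t / p) * K t)
      ≤ rexp (-(x + 1 / p) * t) * (rexp (s / p) * K s) :=
        mul_le_mul_of_nonneg_left (hKmono hs ht hst.le) (exp_pos _).le
    _ < rexp (-(x + 1 / p) * s) * (rexp (s / p) * K s) :=
        mul_lt_mul_of_pos_right (exp_lt_exp.2 (by nlinarith)) (hKpos s hs)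

lemma integrableOn_mul_exp_neg_mul (hKpos : ∀ t ≥ (0:ℝ), 0 < rexp (t / p) * K t)
    (hKmono : AntitoneOn (fun t => rexp (t / p) * K t) (Ici 0)) {x : ℝ} (hx : -1 / p < x) :
    IntegrableOn (fun t => K t * rexp (-x * t)) (Ioi 0) := by
  have hε : 0 < x + 1 / p := by rw [neg_div] at hx; linarith
  refine Integrable.mono' ((exp_neg_integrableOn_Ioi 0 hε).const_mul (K 0))
    ((aemeasurable_of_antitoneOn_exp_div_mul hKmono).mul
      (by fun_prop : Measurable fun t => rexp (-x * t)).aemeasurable).aestronglyMeasurable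
    ((ae_restrict_iff' measurableSet_Ioi).2 (ae_of_all _ fun t ht => ?_))
  have hg := hKmono self_mem_Ici (mem_Ici.2 ht.le) ht.le
  simp only [zero_div, exp_zero, one_mul] at hg
  rw [Real.norm_eq_abs, mul_exp_neg_mul_eq _ p x,
    abs_of_pos (mul_pos (exp_pos _) (hKpos t ht.le)), mul_comm (K 0)]
  exact mul_le_mul_of_nonneg_left hg (exp_pos _).le

lemma integrableOn_laplace (hKpos : ∀ t ≥ (0:ℝ), 0 < rexp (t / p) * K t)
    (hKmono : AntitoneOn (fun t => rexp (t / p) * K t) (Ici 0)) {z : ℂ} (hz : -1 / p < z.re) :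
    IntegrableOn (fun t : ℝ => (K t : ℂ) * Complex.exp (-z * t)) (Ioi 0) := by
  have hmeas : AEMeasurable (fun t : ℝ => (K t : ℂ) * Complex.exp (-z * t))
      (volume.restrict (Ioi 0)) := by
    have := aemeasurable_of_antitoneOn_exp_div_mul hKmono
    fun_prop
  refine Integrable.mono' (integrableOn_mul_exp_neg_mul hKpos hKmono hz) hmeas.aestronglyMeasurable
    ((ae_restrict_iff' measurableSet_Ioi).2 (ae_of_all _ fun t ht => ?_))
  have hK : 0 < K t := pos_of_mul_pos_right (hKpos t ht.le) (exp_pos _).le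
  rw [norm_ofReal_mul_cexp_neg_mul, abs_of_pos hK]

lemma integral_mul_exp_neg_mul_pos (hKpos : ∀ t ≥ (0:ℝ), 0 < rexp (t / p) * K t)
    (hKmono : AntitoneOn (fun t => rexp (t / p) * K t) (Ici 0)) {x : ℝ} (hx : -1 / p < x) :
    0 < ∫ t in Ioi 0, K t * rexp (-x * t) := by
  have hpos : ∀ t ∈ Ioi (0:ℝ), 0 < K t * rexp (-x * t) := fun t ht =>
    mul_pos (pos_of_mul_pos_right (hKpos t ht.le) (exp_pos _).le) (exp_pos _)
  rw [setIntegral_pos_iff_support_of_nonneg_ae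
    ((ae_restrict_iff' measurableSet_Ioi).2 (ae_of_all _ fun t ht => (hpos t ht).le))
    (integrableOn_mul_exp_neg_mul hKpos hKmono hx),
    inter_eq_right.2 fun t ht => Function.mem_support.2 (hpos t ht).ne', volume_Ioi]
  exact ENNReal.zero_lt_top

lemma re_integral_ofReal_mul_cexp_neg_mul {z : ℂ}
    (hint : IntegrableOn (fun t : ℝ => (K t : ℂ) * Complex.exp (-z * t)) (Ioi 0)) :
    (∫ t in Ioi 0, (K t : ℂ) * Complex.exp (-z * t)).re
      = ∫ t in Ioi 0, K t * rexp (-z.re * t) * cos (z.im * t) := by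
  rw [← RCLike.re_to_complex, ← integral_re hint]
  simp only [RCLike.re_to_complex, re_ofReal_mul_cexp_neg_mul]

lemma im_integral_ofReal_mul_cexp_neg_mul {z : ℂ}
    (hint : IntegrableOn (fun t : ℝ => (K t : ℂ) * Complex.exp (-z * t)) (Ioi 0)) :
    (∫ t in Ioi 0, (K t : ℂ) * Complex.exp (-z * t)).im
      = -∫ t in Ioi 0, K t * rexp (-z.re * t) * sin (z.im * t) := by
  rw [← RCLike.im_to_complex, ← integral_im hint, ← integral_neg]
  simp only [RCLike.im_to_complex, im_ofReal_mul_cexp_neg_mul]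

end Laplace

theorem stmt_2_general (p : ℝ) (K : ℝ → ℝ)
    (hKpos : ∀ t ≥ (0:ℝ), 0 < Real.exp (t / p) * K t)
    (hKmono : AntitoneOn (fun t => Real.exp (t / p) * K t) (Set.Ici 0)) :
    (∀ z : ℂ, -1 / p < z.re →
      IntegrableOn (fun t : ℝ => (K t : ℂ) * Complex.exp (-z * (t : ℂ))) (Set.Ioi 0)) ∧
    (∀ z : ℂ, -1 / p < z.re →
      1 + (∫ t in Set.Ioi (0:ℝ), (K t : ℂ) * Complex.exp (-z * (t : ℂ))) ≠ 0) ∧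
    (∀ z : ℂ, -1 / p < z.re → z.im ≠ 0 →
      (∫ t in Set.Ioi (0:ℝ), (K t : ℂ) * Complex.exp (-z * (t : ℂ))).im ≠ 0) ∧
    (∀ x : ℝ, -1 / p < x →
      0 < ∫ t in Set.Ioi (0:ℝ), K t * Real.exp (-x * t)) := by
  have hre_pos : ∀ x : ℝ, -1 / p < x → 0 < ∫ t in Ioi 0, K t * rexp (-x * t) :=
    fun x hx => integral_mul_exp_neg_mul_pos hKpos hKmono hx
  have him_ne : ∀ z : ℂ, -1 / p < z.re → z.im ≠ 0 →
      (∫ t in Ioi 0, (K t : ℂ) * Complex.exp (-z * t)).im ≠ 0 := fun z hz hy => by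
    rw [im_integral_ofReal_mul_cexp_neg_mul (integrableOn_laplace hKpos hKmono hz), neg_ne_zero]
    exact integral_Ioi_mul_sin_mul_ne_zero (integrableOn_mul_exp_neg_mul hKpos hKmono hz)
      (strictAntiOn_mul_exp_neg_mul hKpos hKmono hz) hy
  refine ⟨fun z hz => integrableOn_laplace hKpos hKmono hz, fun z hz h => ?_, him_ne, hre_pos⟩
  by_cases hy : z.im = 0
  · have hre := congrArg Complex.re h
    rw [Complex.add_re, Complex.one_re, Complex.zero_re,
      re_integral_ofReal_mul_cexp_neg_mul (integrableOn_laplace hKpos hKmono hz)] at hre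
    simp only [hy, zero_mul, cos_zero, mul_one] at hre
    linarith [hre_pos z.re hz]
  · exact him_ne z hz hy (by simpa using congrArg Complex.im h)

/-- if t ↦ e^{t/p}K(t) is positive and nonincreasing on [0,∞), then the
Laplace transform K̂(z) = ∫_0^∞ K(t)e^{−zt} dt converges absolutely for Re z > −1/p and
1 + K̂(z) ≠ 0 there; moreover Im K̂(z) ≠ 0 when Im z ≠ 0, and K̂(z) > 0 for real z > −1/p. -/
theorem stmt_2 (p : ℝ) (hp : 0 < p) (K : ℝ → ℝ)
    (hKpos : ∀ t ≥ (0:ℝ), 0 < Real.exp (t / p) * K t)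
    (hKmono : AntitoneOn (fun t => Real.exp (t / p) * K t) (Set.Ici 0)) :
    (∀ z : ℂ, -1 / p < z.re →
      IntegrableOn (fun t : ℝ => (K t : ℂ) * Complex.exp (-z * (t : ℂ))) (Set.Ioi 0)) ∧
    (∀ z : ℂ, -1 / p < z.re →
      1 + (∫ t in Set.Ioi (0:ℝ), (K t : ℂ) * Complex.exp (-z * (t : ℂ))) ≠ 0) ∧
    (∀ z : ℂ, -1 / p < z.re → z.im ≠ 0 →
      (∫ t in Set.Ioi (0:ℝ), (K t : ℂ) * Complex.exp (-z * (t : ℂ))).im ≠ 0) ∧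
    (∀ x : ℝ, -1 / p < x →
      0 < ∫ t in Set.Ioi (0:ℝ), K t * Real.exp (-x * t)) :=
  stmt_2_general p K hKpos hKmono
end

section
/- (Lemma 3.1.) Let p > 0 and suppose h : (0,∞) → ℝ is C², positive, decreasing, convex, integrable on (0,1), lim_{y→∞} h(y) = h_∞ > 0, sup_{y>0} y|h'(y)| < ∞, and h'(y) + (1 + y/p) y h''(y) ≥ 0 for all y > 0. Let φ : (0,∞) → ℝ be a negative integrable function, let I_p > 0 be a constant, and assume d := p I_p + ∫_0^∞ φ(y) (Aξ_p)(y) dy > 0. Define K(t) = −(1/d) ∫_0^∞ φ(y) (e^{−Bt} B(Aξ_p))(y) dy for t ≥ 0. Then the function t ↦ e^{t/p} K(t) is positive and decreasing on [0,∞). -/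
/-!
With `F(y) = ∫_y^∞ p h(y')/(p+y')² dy'` one has `ξ_p = (p+y) F`, hence `Aξ_p = p (F + y h/(p+y))`
and `g := B(Aξ_p) = F + y h/(p+y) − y h'`. Since `g' = −(p/(p+y)) (h' + (1+y/p) y h'')`, the last
hypothesis on `h` says exactly that `g` is decreasing; `g > 0` because `h > 0 ≥ h'`, and `g` is
bounded because `F(0+) < ∞`, `y h(y) ≤ ∫_0^y h` and `y |h'(y)|` is bounded. The semigroup `e^{−Bt}`
transports along the characteristics `s_t(y) = (p+y) e^{t/p} − p ≥ y` of `B`, so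
`e^{t/p} K(t) = (1/d) ∫ (−φ(y)) g(s_t(y)) dy`, with an integrand positive and decreasing in `t`.
-/

open MeasureTheory Real Filter Set

/-- The operator (Aζ)(y) = ζ(y) − yζ'(y). -/
noncomputable def opA (ζ : ℝ → ℝ) : ℝ → ℝ := fun y => ζ y - y * deriv ζ y

/-- The operator (Bζ)(y) = (1/p)ζ(y) − (1 + y/p)ζ'(y). -/
noncomputable def opB (p : ℝ) (ζ : ℝ → ℝ) : ℝ → ℝ :=
  fun y => (1 / p) * ζ y - (1 + y / p) * deriv ζ y

/-- The equilibrium profile ξ_p(y) = (p+y)∫_y^∞ p h(y')/(p+y')² dy'. -/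
noncomputable def xiP (p : ℝ) (h : ℝ → ℝ) : ℝ → ℝ :=
  fun y => (p + y) * ∫ y' in Set.Ioi y, p * h y' / (p + y') ^ 2

/-- The semigroup (e^{−Bt}ζ)(y) = e^{−t/p} ζ(e^{t/p}y + p(e^{t/p} − 1)). -/
noncomputable def sgB (p t : ℝ) (ζ : ℝ → ℝ) : ℝ → ℝ :=
  fun y => Real.exp (-t / p) * ζ (Real.exp (t / p) * y + p * (Real.exp (t / p) - 1))

/-- The pairing ⟨φ, ζ⟩ = ∫_0^∞ φ(y)ζ(y) dy. -/
noncomputable def pairing (φ ζ : ℝ → ℝ) : ℝ := ∫ y in Set.Ioi (0:ℝ), φ y * ζ y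

open Topology

theorem hasDerivAt_integral_Ioi_s3 {f : ℝ → ℝ} {a x : ℝ} (hf : IntegrableOn f (Ioi a))
    (hax : a < x) (hfx : ContinuousAt f x) :
    HasDerivAt (fun y => ∫ t in Ioi y, f t) (-f x) x := by
  have hI : HasDerivAt (fun y => ∫ t in a..y, f t) (f x) x :=
    intervalIntegral.integral_hasDerivAt_right
      ((intervalIntegrable_iff_integrableOn_Ioc_of_le hax.le).2 (hf.mono_set Ioc_subset_Ioi_self))
      (_root_.AEStronglyMeasurable.stronglyMeasurableAtFilter_of_mem hf.aestronglyMeasurable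
        (Ioi_mem_nhds hax)) hfx
  have hsplit : (fun y => ∫ t in Ioi y, f t) =ᶠ[𝓝 x]
      fun y => (∫ t in Ioi a, f t) - ∫ t in a..y, f t := by
    filter_upwards [Ioi_mem_nhds hax] with y hy
    rw [← intervalIntegral.integral_interval_add_Ioi hf (hf.mono_set (Ioi_subset_Ioi hy.le)),
      add_sub_cancel_left]
  simpa using ((hasDerivAt_const x _).sub hI).congr_of_eventuallyEq hsplit

theorem mul_le_setIntegral_Ioo_of_antitoneOn {h : ℝ → ℝ} {b y : ℝ}
    (hdec : AntitoneOn h (Ioi 0)) (hnn : ∀ y > 0, 0 ≤ h y)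
    (hint : IntegrableOn h (Ioo 0 b)) (hy : 0 < y) (hyb : y ≤ b) :
    y * h y ≤ ∫ t in Ioo 0 b, h t := by
  calc y * h y = ∫ _ in Ioo 0 y, h y := by simp [hy.le]
    _ ≤ ∫ t in Ioo 0 y, h t :=
      setIntegral_mono_on (by simp) (hint.mono_set (Ioo_subset_Ioo_right hyb)) measurableSet_Ioo
        fun t ht => hdec ht.1 hy ht.2.le
    _ ≤ ∫ t in Ioo 0 b, h t :=
      setIntegral_mono_set hint (ae_restrict_of_forall_mem measurableSet_Ioo fun t ht => hnn t ht.1)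
        (Ioo_subset_Ioo_right hyb).eventuallyLE

theorem deriv_nonpos_of_antitoneOn {h : ℝ → ℝ} {s : Set ℝ} {x : ℝ} (hdec : AntitoneOn h s)
    (hs : s ∈ 𝓝 x) : deriv h x ≤ 0 := by
  rw [← derivWithin_of_mem_nhds hs]
  exact hdec.derivWithin_nonpos

theorem integrableOn_mul_comp {φ g σ : ℝ → ℝ} {s t : Set ℝ} {C : ℝ} (hs : MeasurableSet s)
    (hφ : IntegrableOn φ s) (hg : ContinuousOn g t) (hgC : ∀ y ∈ t, |g y| ≤ C)
    (hσ : Continuous σ) (hσst : MapsTo σ s t) :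
    IntegrableOn (fun y => φ y * g (σ y)) s :=
  hφ.mul_bdd ((hg.comp hσ.continuousOn hσst).aestronglyMeasurable hs)
    (ae_restrict_of_forall_mem hs fun _ hy => hgC _ (hσst hy))

section Transport

variable {φ g : ℝ → ℝ} {σ : ℝ → ℝ → ℝ} {C : ℝ}

theorem integrableOn_mul_comp_Ioi (hφi : IntegrableOn φ (Ioi 0)) (hg : ContinuousOn g (Ioi 0))
    (hg_pos : ∀ y > 0, 0 < g y) (hgC : ∀ y > 0, g y ≤ C) (hσ : ∀ t, Continuous (σ t))
    (hσ_le : ∀ t ≥ 0, ∀ y > 0, y ≤ σ t y) {t : ℝ} (ht : 0 ≤ t) :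
    IntegrableOn (fun y => φ y * g (σ t y)) (Ioi 0) :=
  integrableOn_mul_comp measurableSet_Ioi hφi hg
    (fun y hy => (abs_of_pos (hg_pos y hy)).trans_le (hgC y hy)) (hσ t)
    fun y (hy : 0 < y) => hy.trans_le (hσ_le t ht y hy)

theorem setIntegral_mul_comp_pos (hφ : ∀ y > 0, 0 < φ y) (hφi : IntegrableOn φ (Ioi 0))
    (hg : ContinuousOn g (Ioi 0)) (hg_pos : ∀ y > 0, 0 < g y) (hgC : ∀ y > 0, g y ≤ C)
    (hσ : ∀ t, Continuous (σ t)) (hσ_le : ∀ t ≥ 0, ∀ y > 0, y ≤ σ t y) {t : ℝ} (ht : 0 ≤ t) :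
    0 < ∫ y in Ioi 0, φ y * g (σ t y) := by
  have hpos : ∀ y > 0, 0 < φ y * g (σ t y) := fun y hy =>
    mul_pos (hφ y hy) (hg_pos _ (hy.trans_le (hσ_le t ht y hy)))
  rw [setIntegral_pos_iff_support_of_nonneg_ae
    (ae_restrict_of_forall_mem measurableSet_Ioi fun y hy => (hpos y hy).le)
    (integrableOn_mul_comp_Ioi hφi hg hg_pos hgC hσ hσ_le ht)]
  refine ((isOpen_Ioi (a := (0 : ℝ))).measure_pos volume nonempty_Ioi).trans_le
    (measure_mono fun y (hy : 0 < y) => ⟨(hpos y hy).ne', hy⟩)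

theorem antitoneOn_setIntegral_mul_comp (hφ : ∀ y > 0, 0 < φ y) (hφi : IntegrableOn φ (Ioi 0))
    (hg : ContinuousOn g (Ioi 0)) (hg_pos : ∀ y > 0, 0 < g y) (hgC : ∀ y > 0, g y ≤ C)
    (hg_anti : AntitoneOn g (Ioi 0)) (hσ : ∀ t, Continuous (σ t))
    (hσ_le : ∀ t ≥ 0, ∀ y > 0, y ≤ σ t y) (hσ_mono : ∀ y > 0, Monotone (σ · y)) :
    AntitoneOn (fun t => ∫ y in Ioi 0, φ y * g (σ t y)) (Ici 0) := by
  intro s (hs : 0 ≤ s) t (ht : 0 ≤ t) hst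
  refine setIntegral_mono_on (integrableOn_mul_comp_Ioi hφi hg hg_pos hgC hσ hσ_le ht)
    (integrableOn_mul_comp_Ioi hφi hg hg_pos hgC hσ hσ_le hs) measurableSet_Ioi fun y hy => ?_
  have hs' := (mem_Ioi.1 hy).trans_le (hσ_le s hs y hy)
  exact mul_le_mul_of_nonneg_left
    (hg_anti hs' (hs'.trans_le (hσ_mono y hy hst)) (hσ_mono y hy hst)) (hφ y hy).le

end Transport

noncomputable def xiDensity (p : ℝ) (h : ℝ → ℝ) (y : ℝ) : ℝ := p * h y / (p + y) ^ 2

theorem continuousAt_xiDensity {p : ℝ} {h : ℝ → ℝ} {x : ℝ} (hx : p + x ≠ 0)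
    (hhx : ContinuousAt h x) : ContinuousAt (xiDensity p h) x :=
  (continuousAt_const.mul hhx).div (by fun_prop) (pow_ne_zero 2 hx)

theorem xiDensity_nonneg {p : ℝ} {h : ℝ → ℝ} {y : ℝ} (hp : 0 ≤ p) (hhy : 0 ≤ h y) :
    0 ≤ xiDensity p h y := by
  unfold xiDensity; positivity

theorem integrableOn_xiDensity {p : ℝ} {h : ℝ → ℝ} (hp : 0 < p) (hh : ContinuousOn h (Ioi 0))
    (hnn : ∀ y > 0, 0 ≤ h y) (hdec : AntitoneOn h (Ioi 0)) (hint : IntegrableOn h (Ioo 0 1)) :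
    IntegrableOn (xiDensity p h) (Ioi 0) := by
  have hcont : ContinuousOn (xiDensity p h) (Ioi 0) := fun x (hx : 0 < x) =>
    (continuousAt_xiDensity (by linarith) (hh.continuousAt (Ioi_mem_nhds hx))).continuousWithinAt
  rw [← Ioc_union_Ioi_eq_Ioi zero_le_one]
  refine IntegrableOn.union ?_ ?_
  · refine Integrable.mono'
      (((integrableOn_Ioc_iff_integrableOn_Ioo (f := h)).2 hint).const_mul p⁻¹)
      ((hcont.mono Ioc_subset_Ioi_self).aestronglyMeasurable measurableSet_Ioc) ?_
    refine ae_restrict_of_forall_mem measurableSet_Ioc fun y hy => ?_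
    have := hnn y hy.1
    rw [Real.norm_of_nonneg (xiDensity_nonneg hp.le this), xiDensity]
    calc p * h y / (p + y) ^ 2 ≤ p * h y / p ^ 2 := by gcongr; linarith [hy.1]
      _ = p⁻¹ * h y := by field_simp
  · refine Integrable.mono'
      ((integrableOn_Ioi_rpow_of_lt (by norm_num : (-2 : ℝ) < -1) one_pos).const_mul (p * h 1))
      ((hcont.mono (Ioi_subset_Ioi zero_le_one)).aestronglyMeasurable measurableSet_Ioi) ?_
    refine ae_restrict_of_forall_mem measurableSet_Ioi fun y (hy : 1 < y) => ?_
    have := hnn 1 one_pos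
    have := hdec (mem_Ioi.2 one_pos) (mem_Ioi.2 (by linarith)) hy.le
    rw [Real.norm_of_nonneg (xiDensity_nonneg hp.le (hnn y (by linarith))), xiDensity,
      rpow_neg (by linarith), rpow_two, ← div_eq_mul_inv]
    gcongr; linarith

noncomputable def xiTail (p : ℝ) (h : ℝ → ℝ) (y : ℝ) : ℝ := ∫ y' in Ioi y, xiDensity p h y'

noncomputable def aXi (p : ℝ) (h : ℝ → ℝ) (y : ℝ) : ℝ := xiTail p h y + y * h y / (p + y)

noncomputable def baXi (p : ℝ) (h : ℝ → ℝ) (y : ℝ) : ℝ := aXi p h y - y * deriv h y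

section EquilibriumProfile

variable {p : ℝ} {h : ℝ → ℝ} {x y : ℝ}

theorem xiP_eq_mul_xiTail : xiP p h = fun y => (p + y) * xiTail p h y := rfl

theorem hasDerivAt_xiTail (hp : 0 < p) (hf : IntegrableOn (xiDensity p h) (Ioi 0)) (hx : 0 < x)
    (hhx : ContinuousAt h x) : HasDerivAt (xiTail p h) (-xiDensity p h x) x :=
  hasDerivAt_integral_Ioi_s3 hf hx (continuousAt_xiDensity (by linarith) hhx)

theorem opA_xiP (hp : 0 < p) (hf : IntegrableOn (xiDensity p h) (Ioi 0)) (hx : 0 < x)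
    (hhx : ContinuousAt h x) : opA (xiP p h) x = p * aXi p h x := by
  have hξ := ((hasDerivAt_id' x).const_add p).fun_mul (hasDerivAt_xiTail hp hf hx hhx)
  rw [opA, xiP_eq_mul_xiTail, hξ.deriv, aXi, xiDensity]
  field_simp
  ring

theorem hasDerivAt_aXi (hp : 0 < p) (hf : IntegrableOn (xiDensity p h) (Ioi 0)) (hx : 0 < x)
    (hhx : DifferentiableAt ℝ h x) : HasDerivAt (aXi p h) (x * deriv h x / (p + x)) x := by
  have hpx : p + x ≠ 0 := by linarith
  refine ((hasDerivAt_xiTail hp hf hx hhx.continuousAt).add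
    (((hasDerivAt_id' x).fun_mul hhx.hasDerivAt).div
      ((hasDerivAt_id' x).const_add p) hpx)).congr_deriv ?_
  rw [xiDensity]
  field_simp
  ring

theorem opB_opA_xiP (hp : 0 < p) (hf : IntegrableOn (xiDensity p h) (Ioi 0))
    (hh : DifferentiableOn ℝ h (Ioi 0)) (hx : 0 < x) : opB p (opA (xiP p h)) x = baXi p h x := by
  have hAξ : opA (xiP p h) =ᶠ[𝓝 x] fun y => p * aXi p h y := by
    filter_upwards [Ioi_mem_nhds hx] with y hy
    exact opA_xiP hp hf hy (hh.continuousOn.continuousAt (Ioi_mem_nhds hy))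
  rw [opB, hAξ.eq_of_nhds, hAξ.deriv_eq,
    ((hasDerivAt_aXi hp hf hx (hh.differentiableAt (Ioi_mem_nhds hx))).const_mul p).deriv, baXi]
  field_simp

theorem hasDerivAt_baXi (hp : 0 < p) (hf : IntegrableOn (xiDensity p h) (Ioi 0))
    (hh : ContDiffOn ℝ 2 h (Ioi 0)) (hx : 0 < x) :
    HasDerivAt (baXi p h)
      (-(p / (p + x)) * (deriv h x + (1 + x / p) * x * iteratedDeriv 2 h x)) x := by
  have hhx : DifferentiableAt ℝ h x :=
    (hh.differentiableOn (by norm_num)).differentiableAt (Ioi_mem_nhds hx)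
  have hh'x : DifferentiableAt ℝ (deriv h) x :=
    ((hh.deriv_of_isOpen isOpen_Ioi (m := 1) (by norm_num)).differentiableOn (by norm_num))
      |>.differentiableAt (Ioi_mem_nhds hx)
  rw [iteratedDeriv_succ, iteratedDeriv_one]
  refine ((hasDerivAt_aXi hp hf hx hhx).sub
    ((hasDerivAt_id' x).fun_mul hh'x.hasDerivAt)).congr_deriv ?_
  field_simp
  ring

theorem antitoneOn_baXi (hp : 0 < p) (hf : IntegrableOn (xiDensity p h) (Ioi 0))
    (hh : ContDiffOn ℝ 2 h (Ioi 0))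
    (hineq : ∀ y > 0, 0 ≤ deriv h y + (1 + y / p) * y * iteratedDeriv 2 h y) :
    AntitoneOn (baXi p h) (Ioi 0) := by
  refine antitoneOn_of_deriv_nonpos (convex_Ioi 0)
    (fun x hx => (hasDerivAt_baXi hp hf hh hx).continuousAt.continuousWithinAt)
    (fun x hx =>
      (hasDerivAt_baXi hp hf hh (interior_subset hx)).differentiableAt.differentiableWithinAt)
    fun x hx => ?_
  rw [interior_Ioi] at hx
  have hpx : 0 < p + x := by linarith [mem_Ioi.1 hx]
  rw [(hasDerivAt_baXi hp hf hh hx).deriv, neg_mul, neg_nonpos]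
  exact mul_nonneg (by positivity) (hineq x hx)

theorem baXi_pos (hp : 0 < p) (hpos : ∀ y > 0, 0 < h y) (hdec : AntitoneOn h (Ioi 0)) (hx : 0 < x) :
    0 < baXi p h x := by
  have hF : 0 ≤ xiTail p h x := setIntegral_nonneg measurableSet_Ioi fun y (hy : x < y) =>
    xiDensity_nonneg hp.le (hpos y (hx.trans hy)).le
  have hmid : 0 < x * h x / (p + x) := by have := hpos x hx; positivity
  have hh' : x * deriv h x ≤ 0 :=
    mul_nonpos_of_nonneg_of_nonpos hx.le (deriv_nonpos_of_antitoneOn hdec (Ioi_mem_nhds hx))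
  rw [baXi, aXi]
  linarith

theorem mul_div_add_le_of_antitoneOn (hp : 0 < p) (hnn : ∀ y > 0, 0 ≤ h y)
    (hdec : AntitoneOn h (Ioi 0)) (hint : IntegrableOn h (Ioo 0 1)) (hy : 0 < y) :
    y * h y / (p + y) ≤ (∫ t in Ioo 0 1, h t) / p + h 1 := by
  have hJ : 0 ≤ (∫ t in Ioo 0 1, h t) / p :=
    div_nonneg (setIntegral_nonneg measurableSet_Ioo fun t ht => hnn t ht.1) hp.le
  rcases le_or_gt y 1 with hy1 | hy1
  · have := mul_nonneg hy.le (hnn y hy)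
    calc y * h y / (p + y) ≤ y * h y / p := by gcongr; linarith
      _ ≤ (∫ t in Ioo 0 1, h t) / p := by
          gcongr; exact mul_le_setIntegral_Ioo_of_antitoneOn hdec hnn hint hy hy1
      _ ≤ _ := le_add_of_nonneg_right (hnn 1 one_pos)
  · have := hnn y hy
    calc y * h y / (p + y) ≤ h y := by
          rw [div_le_iff₀ (by linarith)]; nlinarith
      _ ≤ h 1 := hdec (mem_Ioi.2 one_pos) (mem_Ioi.2 hy) hy1.le
      _ ≤ _ := le_add_of_nonneg_left hJ

theorem baXi_le {M : ℝ} (hp : 0 < p) (hf : IntegrableOn (xiDensity p h) (Ioi 0))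
    (hnn : ∀ y > 0, 0 ≤ h y) (hdec : AntitoneOn h (Ioi 0)) (hint : IntegrableOn h (Ioo 0 1))
    (hM : ∀ y > 0, y * |deriv h y| ≤ M) (hy : 0 < y) :
    baXi p h y ≤ (∫ t in Ioi 0, xiDensity p h t) + ((∫ t in Ioo 0 1, h t) / p + h 1) + M := by
  have hF : xiTail p h y ≤ ∫ t in Ioi 0, xiDensity p h t :=
    setIntegral_mono_set hf (ae_restrict_of_forall_mem measurableSet_Ioi fun t ht =>
      xiDensity_nonneg hp.le (hnn t ht)) (Ioi_subset_Ioi hy.le).eventuallyLE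
  have hh' : -(y * deriv h y) ≤ M := by
    have := mul_le_mul_of_nonneg_left (neg_le_abs (deriv h y)) hy.le
    linarith [hM y hy]
  have := mul_div_add_le_of_antitoneOn hp hnn hdec hint hy
  rw [baXi, aXi]
  linarith

end EquilibriumProfile

-- The characteristics of `B`: `∂ₜ s = 1 + s/p`, `s₀(y) = y`, i.e. `s_t(y) = (p+y) e^{t/p} − p`.
noncomputable def charFlow (p t y : ℝ) : ℝ := exp (t / p) * y + p * (exp (t / p) - 1)

theorem sgB_apply (p t : ℝ) (ζ : ℝ → ℝ) (y : ℝ) :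
    sgB p t ζ y = exp (-t / p) * ζ (charFlow p t y) := rfl

theorem continuous_charFlow (p t : ℝ) : Continuous (charFlow p t) := by
  unfold charFlow; fun_prop

theorem monotone_charFlow {p y : ℝ} (hp : 0 ≤ p) (hy : 0 ≤ p + y) :
    Monotone fun t => charFlow p t y := fun s t hst => by
  have := exp_le_exp.2 (div_le_div_of_nonneg_right hst hp)
  simp only [charFlow]
  nlinarith

theorem le_charFlow {p t y : ℝ} (hp : 0 ≤ p) (ht : 0 ≤ t) (hy : 0 ≤ p + y) :
    y ≤ charFlow p t y := by
  simpa [charFlow] using monotone_charFlow hp hy ht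

theorem setIntegral_mul_sgB_opB_opA_xiP {p t : ℝ} {h : ℝ → ℝ} (φ : ℝ → ℝ) (hp : 0 < p)
    (hf : IntegrableOn (xiDensity p h) (Ioi 0)) (hh : DifferentiableOn ℝ h (Ioi 0)) (ht : 0 ≤ t) :
    ∫ y in Ioi 0, φ y * sgB p t (opB p (opA (xiP p h))) y
      = -exp (-t / p) * ∫ y in Ioi 0, -φ y * baXi p h (charFlow p t y) := by
  rw [← integral_const_mul]
  refine setIntegral_congr_fun measurableSet_Ioi fun y (hy : 0 < y) => ?_
  rw [sgB_apply, opB_opA_xiP hp hf hh (hy.trans_le (le_charFlow hp.le ht (by linarith)))]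
  ring

theorem stmt_3_general (p : ℝ) (hp : 0 < p) (h φ : ℝ → ℝ)
    (hh2 : ContDiffOn ℝ 2 h (Set.Ioi 0))
    (hpos : ∀ y > (0:ℝ), 0 < h y)
    (hdec : AntitoneOn h (Set.Ioi 0))
    (hint : IntegrableOn h (Set.Ioo (0:ℝ) 1))
    (hd1 : ∃ M, ∀ y > (0:ℝ), y * |deriv h y| ≤ M)
    (hineq : ∀ y > (0:ℝ), 0 ≤ deriv h y + (1 + y / p) * y * iteratedDeriv 2 h y)
    (hφneg : ∀ y > (0:ℝ), φ y < 0)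
    (hφint : IntegrableOn φ (Set.Ioi 0))
    (d : ℝ) (hdpos : 0 < d)
    (K : ℝ → ℝ)
    (hK : ∀ t, K t
        = -(1 / d) * ∫ y in Set.Ioi (0:ℝ), φ y * sgB p t (opB p (opA (xiP p h))) y) :
    (∀ t ≥ (0:ℝ), 0 < Real.exp (t / p) * K t) ∧
    AntitoneOn (fun t => Real.exp (t / p) * K t) (Set.Ici 0) := by
  obtain ⟨M, hM⟩ := hd1
  have hnn : ∀ y > 0, 0 ≤ h y := fun y hy => (hpos y hy).le
  have hf := integrableOn_xiDensity hp hh2.continuousOn hnn hdec hint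
  have hK_eq : ∀ t ≥ 0, exp (t / p) * K t
      = 1 / d * ∫ y in Ioi 0, -φ y * baXi p h (charFlow p t y) := fun t ht => by
    rw [hK, setIntegral_mul_sgB_opB_opA_xiP φ hp hf (hh2.differentiableOn (by norm_num)) ht,
      neg_div, exp_neg]
    field_simp
  have hφ' : ∀ y > 0, 0 < -φ y := fun y hy => neg_pos.2 (hφneg y hy)
  have hg : ContinuousOn (baXi p h) (Ioi 0) := fun x (hx : 0 < x) =>
    (hasDerivAt_baXi hp hf hh2 hx).continuousAt.continuousWithinAt
  have hg_pos : ∀ y > 0, 0 < baXi p h y := fun y hy => baXi_pos hp hpos hdec hy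
  have hg_le := fun y (hy : 0 < y) => baXi_le hp hf hnn hdec hint hM hy
  have hflow_le : ∀ t ≥ 0, ∀ y > 0, y ≤ charFlow p t y := fun t ht y hy =>
    le_charFlow hp.le ht (by linarith)
  refine ⟨fun t ht => ?_, fun s hs t ht hst => ?_⟩
  · rw [hK_eq t ht]
    exact mul_pos (one_div_pos.2 hdpos) (setIntegral_mul_comp_pos hφ' hφint.neg hg hg_pos hg_le
      (continuous_charFlow p) hflow_le ht)
  · simp only [hK_eq s hs, hK_eq t ht]
    refine mul_le_mul_of_nonneg_left ?_ (one_div_pos.2 hdpos).le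
    exact antitoneOn_setIntegral_mul_comp hφ' hφint.neg hg hg_pos hg_le
      (antitoneOn_baXi hp hf hh2 hineq) (continuous_charFlow p) hflow_le
      (fun y hy => monotone_charFlow hp.le (by linarith)) hs ht hst

/-- Lemma 3.1: the kernel K(t) = −(1/d)⟨φ, e^{−Bt}B(Aξ_p)⟩ has
t ↦ e^{t/p}K(t) positive and decreasing on [0,∞). -/
theorem stmt_3 (p hinf I_p : ℝ) (hp : 0 < p) (h φ : ℝ → ℝ)
    (hh2 : ContDiffOn ℝ 2 h (Set.Ioi 0))
    (hpos : ∀ y > (0:ℝ), 0 < h y)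
    (hdec : AntitoneOn h (Set.Ioi 0))
    (hconv : ConvexOn ℝ (Set.Ioi 0) h)
    (hint : IntegrableOn h (Set.Ioo (0:ℝ) 1))
    (hlim : Tendsto h atTop (nhds hinf)) (hinfpos : 0 < hinf)
    (hd1 : ∃ M, ∀ y > (0:ℝ), y * |deriv h y| ≤ M)
    (hineq : ∀ y > (0:ℝ), 0 ≤ deriv h y + (1 + y / p) * y * iteratedDeriv 2 h y)
    (hφneg : ∀ y > (0:ℝ), φ y < 0)
    (hφint : IntegrableOn φ (Set.Ioi 0))
    (hIp : 0 < I_p)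
    (d : ℝ) (hddef : d = p * I_p + pairing φ (opA (xiP p h))) (hdpos : 0 < d)
    (K : ℝ → ℝ)
    (hK : ∀ t, K t
        = -(1 / d) * ∫ y in Set.Ioi (0:ℝ), φ y * sgB p t (opB p (opA (xiP p h))) y) :
    (∀ t ≥ (0:ℝ), 0 < Real.exp (t / p) * K t) ∧
    AntitoneOn (fun t => Real.exp (t / p) * K t) (Set.Ici 0) :=
  stmt_3_general p hp h φ hh2 hpos hdec hint hd1 hineq hφneg hφint d hdpos K hK
end

section
/- (Lemma 7.1.) Let g : (0,∞) → [0,∞) be C¹ and decreasing, such that the function z ↦ −z g'(z) is decreasing, and assume g'(z) < 0 for some z > 0. Set z_∞ = sup{z > 0 : g'(z) < 0} (so g' < 0 on (0, z_∞)), fix z₀ ∈ (0, z_∞), and define F(z) = −z log(−g'(z)) + ∫_{z₀}^z log(−g'(z')) dz' for z ∈ (0, z_∞). Then: (i) g is convex; (ii) F(z₂) − F(z₁) ≥ z₂ − z₁ for all 0 < z₁ < z₂ < z_∞, so F is strictly increasing on (0, z_∞); (iii) lim_{z→z_∞} F(z) = ∞. -/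
/-!
Write ψ(z) = -z g'(z), positive and decreasing on (0, z_∞). Since log(-g'(z)) = log ψ(z) - log z
and ∫ log = z log z - z,
  F(z₂) - F(z₁) - (z₂ - z₁) = z₁ log ψ(z₁) - z₂ log ψ(z₂) + ∫_{z₁}^{z₂} log ψ,
and as log ψ is decreasing the integral is at least (z₂ - z₁) log ψ(z₂), so the right-hand side is
at least z₁ (log ψ(z₁) - log ψ(z₂)) ≥ 0. At a finite z_∞ continuity forces g'(z_∞) = 0, hence
log ψ(z₂) → -∞ and the same bound drives F to +∞. Convexity holds because g' = -ψ(z)/z increases.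
-/

open MeasureTheory Real Filter Set Topology

/-- The function F(z) = −z log(−g'(z)) + ∫_{z₀}^z log(−g'(z')) dz'. -/
noncomputable def Fg (g : ℝ → ℝ) (z₀ z : ℝ) : ℝ :=
  -z * Real.log (-deriv g z) + ∫ z' in z₀..z, Real.log (-deriv g z')

theorem AntitoneOn.deriv_nonpos_of_isOpen {g : ℝ → ℝ} {s : Set ℝ} {x : ℝ} (hg : AntitoneOn g s)
    (hs : IsOpen s) (hx : x ∈ s) : deriv g x ≤ 0 := by
  rw [← derivWithin_of_isOpen hs hx]
  exact hg.derivWithin_nonpos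

theorem AntitoneOn.sub_mul_le_intervalIntegral {v : ℝ → ℝ} {a b : ℝ} (hv : AntitoneOn v (Icc a b))
    (hab : a ≤ b) : (b - a) * v b ≤ ∫ x in a..b, v x := by
  calc (b - a) * v b = ∫ _ in a..b, v b := by simp
    _ ≤ ∫ x in a..b, v x :=
      intervalIntegral.integral_mono_on hab intervalIntegrable_const
        (AntitoneOn.intervalIntegrable (by rwa [uIcc_of_le hab]))
        fun x hx => hv hx (right_mem_Icc.2 hab) hx.2

section LogIntegral

variable {φ : ℝ → ℝ} {a b : ℝ}

theorem mul_pos_of_antitoneOn_mul (hφ : AntitoneOn (fun z => z * φ z) (Icc a b))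
    (hb : 0 < b * φ b) {z : ℝ} (hz : z ∈ Icc a b) : 0 < z * φ z :=
  hb.trans_le (hφ hz (right_mem_Icc.2 (hz.1.trans hz.2)) hz.2)

theorem antitoneOn_log_mul (hφ : AntitoneOn (fun z => z * φ z) (Icc a b)) (hb : 0 < b * φ b) :
    AntitoneOn (fun z => log (z * φ z)) (Icc a b) :=
  fun _ hx _ hy hxy => log_le_log (mul_pos_of_antitoneOn_mul hφ hb hy) (hφ hx hy hxy)

theorem log_eq_log_mul_sub_log (ha : 0 < a) (hφ : AntitoneOn (fun z => z * φ z) (Icc a b))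
    (hb : 0 < b * φ b) ⦃z : ℝ⦄ (hz : z ∈ Icc a b) : log (φ z) = log (z * φ z) - log z := by
  have hz0 : 0 < z := ha.trans_le hz.1
  have hφz : 0 < φ z := pos_of_mul_pos_right (mul_pos_of_antitoneOn_mul hφ hb hz) hz0.le
  rw [log_mul hz0.ne' hφz.ne']
  ring

theorem intervalIntegrable_log_mul (hab : a ≤ b) (hφ : AntitoneOn (fun z => z * φ z) (Icc a b))
    (hb : 0 < b * φ b) : IntervalIntegrable (fun z => log (z * φ z)) volume a b :=
  AntitoneOn.intervalIntegrable (by rw [uIcc_of_le hab]; exact antitoneOn_log_mul hφ hb)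

theorem intervalIntegrable_log_of_antitoneOn_mul (ha : 0 < a) (hab : a ≤ b)
    (hφ : AntitoneOn (fun z => z * φ z) (Icc a b)) (hb : 0 < b * φ b) :
    IntervalIntegrable (fun z => log (φ z)) volume a b :=
  ((intervalIntegrable_log_mul hab hφ hb).sub intervalIntegral.intervalIntegrable_log').congr
    fun _ hz => (log_eq_log_mul_sub_log ha hφ hb (Ioc_subset_Icc_self (uIoc_of_le hab ▸ hz))).symm

theorem sub_add_mul_log_sub_le (ha : 0 < a) (hab : a ≤ b)
    (hφ : AntitoneOn (fun z => z * φ z) (Icc a b)) (hb : 0 < b * φ b) :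
    b - a + a * (log (a * φ a) - log (b * φ b)) ≤
      -b * log (φ b) + a * log (φ a) + ∫ z in a..b, log (φ z) := by
  have hlog := log_eq_log_mul_sub_log ha hφ hb
  have hint : ∫ z in a..b, log (φ z) =
      (∫ z in a..b, log (z * φ z)) - (b * log b - a * log a - b + a) := by
    rw [intervalIntegral.integral_congr fun z hz => hlog (uIcc_of_le hab ▸ hz),
      intervalIntegral.integral_sub (intervalIntegrable_log_mul hab hφ hb)
        intervalIntegral.intervalIntegrable_log',
      integral_log]
  rw [hint, hlog (left_mem_Icc.2 hab), hlog (right_mem_Icc.2 hab)]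
  linarith [(antitoneOn_log_mul hφ hb).sub_mul_le_intervalIntegral hab]

theorem antitoneOn_of_antitoneOn_mul (hφ : AntitoneOn (fun z => z * φ z) (Ioi 0))
    (hφ0 : ∀ z ∈ Ioi (0 : ℝ), 0 ≤ φ z) : AntitoneOn φ (Ioi 0) := by
  intro x hx y hy hxy
  refine le_of_mul_le_mul_left ?_ (show (0 : ℝ) < x from hx)
  calc x * φ y ≤ y * φ y := mul_le_mul_of_nonneg_right hxy (hφ0 y hy)
    _ ≤ x * φ x := hφ hx hy hxy

end LogIntegral

section NegDeriv

variable {g : ℝ → ℝ} {z₀ a b : ℝ}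

theorem convexOn_Ioi_of_antitoneOn_mul_neg_deriv (hd : DifferentiableOn ℝ g (Ioi 0))
    (hg : AntitoneOn g (Ioi 0)) (hψ : AntitoneOn (fun z => z * -deriv g z) (Ioi 0)) :
    ConvexOn ℝ (Ioi 0) g := by
  have hanti := antitoneOn_of_antitoneOn_mul hψ fun z hz =>
    neg_nonneg.2 (hg.deriv_nonpos_of_isOpen isOpen_Ioi hz)
  refine MonotoneOn.convexOn_of_deriv (convex_Ioi 0) hd.continuousOn (by rwa [interior_Ioi]) ?_
  rw [interior_Ioi]
  exact fun x hx y hy hxy => neg_le_neg_iff.1 (hanti hx hy hxy)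

theorem deriv_neg_of_le (hψ : AntitoneOn (fun z => z * -deriv g z) (Ioi 0)) {z : ℝ} (hz : 0 < z)
    (hzb : z ≤ b) (hb : deriv g b < 0) : deriv g z < 0 := by
  have hψzb : 0 < z * -deriv g z :=
    mul_pos_of_antitoneOn_mul (hψ.mono fun _ hx => hz.trans_le hx.1)
      (mul_pos (hz.trans_le hzb) (neg_pos.2 hb)) ⟨le_rfl, hzb⟩
  exact neg_pos.1 (pos_of_mul_pos_right hψzb hz.le)

theorem deriv_neg_of_lt_isLUB (hψ : AntitoneOn (fun z => z * -deriv g z) (Ioi 0)) {zinf z : ℝ}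
    (hlub : IsLUB {z : ℝ | 0 < z ∧ deriv g z < 0} zinf) (hz : 0 < z) (hzlt : z < zinf) :
    deriv g z < 0 := by
  obtain ⟨s, ⟨-, hs⟩, hzs⟩ := (lt_isLUB_iff hlub).1 hzlt
  exact deriv_neg_of_le hψ hz hzs.le hs

theorem deriv_eq_zero_of_isLUB {zinf : ℝ} (hcont : ContinuousAt (deriv g) zinf)
    (hnonpos : deriv g zinf ≤ 0) (hlub : IsLUB {z : ℝ | 0 < z ∧ deriv g z < 0} zinf)
    (hzinf : 0 < zinf) : deriv g zinf = 0 := by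
  refine hnonpos.antisymm (not_lt.1 fun hlt => ?_)
  obtain ⟨b, hb, hbneg, hbpos⟩ :=
    ((hcont.eventually_lt continuousAt_const hlt).and (eventually_gt_nhds hzinf)).exists_gt
  exact (hlub.1 ⟨hbpos, hbneg⟩).not_gt hb

theorem intervalIntegrable_log_neg_deriv (hψ : AntitoneOn (fun z => z * -deriv g z) (Ioi 0))
    (ha : 0 < a) (hb : 0 < b) (ha' : deriv g a < 0) (hb' : deriv g b < 0) :
    IntervalIntegrable (fun z => log (-deriv g z)) volume a b := by
  wlog hab : a ≤ b generalizing a b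
  · exact (this hb ha hb' ha' (le_of_not_ge hab)).symm
  exact intervalIntegrable_log_of_antitoneOn_mul ha hab (hψ.mono fun _ hx => ha.trans_le hx.1)
    (mul_pos hb (neg_pos.2 hb'))

theorem Fg_sub_Fg_eq (h₀a : IntervalIntegrable (fun z => log (-deriv g z)) volume z₀ a)
    (hab : IntervalIntegrable (fun z => log (-deriv g z)) volume a b) :
    Fg g z₀ b - Fg g z₀ a =
      -b * log (-deriv g b) + a * log (-deriv g a) + ∫ z in a..b, log (-deriv g z) := by
  rw [Fg, Fg, ← intervalIntegral.integral_add_adjacent_intervals h₀a hab]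
  ring

theorem sub_add_mul_log_sub_le_Fg_sub_Fg (hψ : AntitoneOn (fun z => z * -deriv g z) (Ioi 0))
    (hz₀ : 0 < z₀) (hz₀' : deriv g z₀ < 0) (ha : 0 < a) (hab : a ≤ b) (hb : deriv g b < 0) :
    b - a + a * (log (a * -deriv g a) - log (b * -deriv g b)) ≤ Fg g z₀ b - Fg g z₀ a := by
  have ha' := deriv_neg_of_le hψ ha hab hb
  rw [Fg_sub_Fg_eq (intervalIntegrable_log_neg_deriv hψ hz₀ ha hz₀' ha')
    (intervalIntegrable_log_neg_deriv hψ ha (ha.trans_le hab) ha' hb)]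
  exact sub_add_mul_log_sub_le ha hab (hψ.mono fun _ hx => ha.trans_le hx.1)
    (mul_pos (ha.trans_le hab) (neg_pos.2 hb))

theorem sub_le_Fg_sub_Fg (hψ : AntitoneOn (fun z => z * -deriv g z) (Ioi 0))
    (hz₀ : 0 < z₀) (hz₀' : deriv g z₀ < 0) (ha : 0 < a) (hab : a ≤ b) (hb : deriv g b < 0) :
    b - a ≤ Fg g z₀ b - Fg g z₀ a := by
  have hlog : log (b * -deriv g b) ≤ log (a * -deriv g a) :=
    log_le_log (mul_pos (ha.trans_le hab) (neg_pos.2 hb)) (hψ ha (ha.trans_le hab) hab)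
  linarith [sub_add_mul_log_sub_le_Fg_sub_Fg hψ hz₀ hz₀' ha hab hb,
    mul_nonneg ha.le (sub_nonneg.2 hlog)]

theorem tendsto_Fg_nhdsLT_of_isLUB (hg : AntitoneOn g (Ioi 0))
    (hψ : AntitoneOn (fun z => z * -deriv g z) (Ioi 0)) (hcont : ContinuousOn (deriv g) (Ioi 0))
    (hz₀ : 0 < z₀) (hz₀' : deriv g z₀ < 0) {zinf : ℝ}
    (hlub : IsLUB {z : ℝ | 0 < z ∧ deriv g z < 0} zinf) :
    Tendsto (Fg g z₀) (𝓝[<] zinf) atTop := by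
  have hzinf : 0 < zinf := hz₀.trans_le (hlub.1 ⟨hz₀, hz₀'⟩)
  have hct : ContinuousAt (deriv g) zinf := hcont.continuousAt (Ioi_mem_nhds hzinf)
  have hzero : deriv g zinf = 0 :=
    deriv_eq_zero_of_isLUB hct (hg.deriv_nonpos_of_isOpen isOpen_Ioi hzinf) hlub hzinf
  have hψ0 : Tendsto (fun z => z * -deriv g z) (𝓝[<] zinf) (𝓝[>] 0) := by
    refine tendsto_nhdsWithin_iff.2 ⟨?_, ?_⟩
    · have h : ContinuousAt (fun z => z * -deriv g z) zinf := continuousAt_id.mul hct.neg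
      rw [ContinuousAt, hzero, neg_zero, mul_zero] at h
      exact h.mono_left nhdsWithin_le_nhds
    · filter_upwards [Ioo_mem_nhdsLT hzinf] with z hz
      exact mul_pos hz.1 (neg_pos.2 (deriv_neg_of_lt_isLUB hψ hlub hz.1 hz.2))
  set a := zinf / 2
  have ha : 0 < a := half_pos hzinf
  have hbound : ∀ᶠ z in 𝓝[<] zinf,
      (Fg g z₀ a + (z - a) + a * log (a * -deriv g a)) + -a * log (z * -deriv g z) ≤ Fg g z₀ z := by
    filter_upwards [Ioo_mem_nhdsLT (half_lt_self hzinf)] with z hz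
    linarith [sub_add_mul_log_sub_le_Fg_sub_Fg hψ hz₀ hz₀' ha hz.1.le
      (deriv_neg_of_lt_isLUB hψ hlub (ha.trans hz.1) hz.2)]
  refine tendsto_atTop_mono' _ hbound (Tendsto.add_atTop
    (tendsto_nhdsWithin_of_tendsto_nhds (((tendsto_id.sub_const a).const_add _).add_const _))
    ((tendsto_log_nhdsGT_zero.comp hψ0).const_mul_atBot_of_neg (neg_lt_zero.2 ha)))

theorem tendsto_Fg_atTop (hψ : AntitoneOn (fun z => z * -deriv g z) (Ioi 0))
    (hz₀ : 0 < z₀) (hz₀' : deriv g z₀ < 0)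
    (hS : ¬ BddAbove {z : ℝ | 0 < z ∧ deriv g z < 0}) : Tendsto (Fg g z₀) atTop atTop := by
  refine tendsto_atTop_mono' _ ?_ (tendsto_atTop_add_const_right _ (Fg g z₀ z₀ - z₀) tendsto_id)
  filter_upwards [eventually_gt_atTop z₀] with z hz
  obtain ⟨s, ⟨-, hs⟩, hzs⟩ := not_bddAbove_iff.1 hS z
  rw [id]
  linarith [sub_le_Fg_sub_Fg hψ hz₀ hz₀' hz₀ hz.le
    (deriv_neg_of_le hψ (hz₀.trans hz) hzs.le hs)]

end NegDeriv

/-- Membership z ∈ (0, z_∞) is expressed as `0 < z ∧ deriv g z < 0`. -/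
theorem stmt_13_general (g : ℝ → ℝ) (z₀ : ℝ)
    (hg1 : ContDiffOn ℝ 1 g (Set.Ioi 0))
    (hgdec : AntitoneOn g (Set.Ioi 0))
    (hzg : AntitoneOn (fun z => -(z * deriv g z)) (Set.Ioi 0))
    (hz₀pos : 0 < z₀) (hz₀ : deriv g z₀ < 0) :
    ConvexOn ℝ (Set.Ioi 0) g ∧
    (∀ z₁ z₂ : ℝ, 0 < z₁ → z₁ < z₂ → deriv g z₂ < 0 →
      z₂ - z₁ ≤ Fg g z₀ z₂ - Fg g z₀ z₁) ∧
    StrictMonoOn (Fg g z₀) {z : ℝ | 0 < z ∧ deriv g z < 0} ∧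
    (∀ zinf : ℝ, IsLUB {z : ℝ | 0 < z ∧ deriv g z < 0} zinf →
      Tendsto (Fg g z₀) (nhdsWithin zinf (Set.Iio zinf)) atTop) ∧
    (¬ BddAbove {z : ℝ | 0 < z ∧ deriv g z < 0} →
      Tendsto (Fg g z₀) atTop atTop) := by
  have hψ : AntitoneOn (fun z => z * -deriv g z) (Ioi 0) := by simpa only [mul_neg] using hzg
  have hgrowth : ∀ z₁ z₂ : ℝ, 0 < z₁ → z₁ < z₂ → deriv g z₂ < 0 →
      z₂ - z₁ ≤ Fg g z₀ z₂ - Fg g z₀ z₁ :=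
    fun z₁ z₂ h₁ h₁₂ h₂ => sub_le_Fg_sub_Fg hψ hz₀pos hz₀ h₁ h₁₂.le h₂
  refine ⟨convexOn_Ioi_of_antitoneOn_mul_neg_deriv (hg1.differentiableOn one_ne_zero) hgdec hψ,
    hgrowth, fun z₁ h₁ z₂ h₂ h₁₂ => ?_,
    fun _ hlub => tendsto_Fg_nhdsLT_of_isLUB hgdec hψ
      (hg1.continuousOn_deriv_of_isOpen isOpen_Ioi le_rfl) hz₀pos hz₀ hlub,
    tendsto_Fg_atTop hψ hz₀pos hz₀⟩
  linarith [hgrowth z₁ z₂ h₁.1 h₁₂ h₂.2]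

/-- Lemma 7.1: for g C¹, nonnegative, decreasing with z ↦ −zg'(z)
decreasing, g is convex, F grows at least linearly on (0, z_∞) (hence is strictly
increasing there), and F(z) → ∞ as z → z_∞, where z_∞ = sup{z > 0 : g'(z) < 0}; here
membership z ∈ (0, z_∞) is expressed as 0 < z ∧ deriv g z < 0. -/
theorem stmt_13 (g : ℝ → ℝ) (z₀ : ℝ)
    (hg1 : ContDiffOn ℝ 1 g (Set.Ioi 0))
    (hgnonneg : ∀ z > (0:ℝ), 0 ≤ g z)
    (hgdec : AntitoneOn g (Set.Ioi 0))
    (hzg : AntitoneOn (fun z => -(z * deriv g z)) (Set.Ioi 0))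
    (hsome : ∃ z > (0:ℝ), deriv g z < 0)
    (hz₀pos : 0 < z₀) (hz₀ : deriv g z₀ < 0) :
    ConvexOn ℝ (Set.Ioi 0) g ∧
    (∀ z₁ z₂ : ℝ, 0 < z₁ → z₁ < z₂ → deriv g z₂ < 0 →
      z₂ - z₁ ≤ Fg g z₀ z₂ - Fg g z₀ z₁) ∧
    StrictMonoOn (Fg g z₀) {z : ℝ | 0 < z ∧ deriv g z < 0} ∧
    (∀ zinf : ℝ, IsLUB {z : ℝ | 0 < z ∧ deriv g z < 0} zinf →
      Tendsto (Fg g z₀) (nhdsWithin zinf (Set.Iio zinf)) atTop) ∧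
    (¬ BddAbove {z : ℝ | 0 < z ∧ deriv g z < 0} →
      Tendsto (Fg g z₀) atTop atTop) :=
  stmt_13_general g z₀ hg1 hgdec hzg hz₀pos hz₀
end

section
/- (Proposition 7.1.) Let p > 0 and let g : (0,∞) → ℝ be continuous, nonnegative and decreasing with limit g(∞) = lim_{z→∞} g(z), and suppose that x ↦ x[g(x) − g(∞)] is decreasing on (0,∞). Fix y > 0, t < T, and x with e^{(T−t)/p} y < x < e^{(T−t)/p}(y + p) − p, and define τ_{x,t} by e^{τ_{x,t}/p} = e^{T/p}(1 + y/p) − (x/p) e^{t/p}. Then t < τ_{x,t} < T, and the supremum, over all measurable controls v : [t,T] → (0,1] for which the solution x(·) of dx(s)/ds = −x(s)/p − v(s) with x(T) = y satisfies x(t) = x, of ∫_t^T g(x(s)/v(s)) ds equals (τ_{x,t} − t) g(∞) + ∫_{τ_{x,t}}^T g(x_p(s)) ds, where x_p(s) = e^{(T−s)/p}(y + p) − p. -/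
open MeasureTheory Real Filter Set

/-- The trajectory associated with a control v :
x(s) = e^{(T−s)/p} y + ∫_s^T e^{(s'−s)/p} v(s') ds'. -/
noncomputable def traj (p y T : ℝ) (v : ℝ → ℝ) (s : ℝ) : ℝ :=
  Real.exp ((T - s) / p) * y + ∫ s' in s..T, Real.exp ((s' - s) / p) * v s'

/-- The free trajectory x_p(s) = e^{(T−s)/p}(y+p) − p, corresponding to v ≡ 1. -/
noncomputable def xpTraj (p y T s : ℝ) : ℝ := Real.exp ((T - s) / p) * (y + p) - p

/-!
Write `X(s) = e^{(s-T)/p} x(s) = y + ∫_s^T e^{(r-T)/p} v(r) dr`. It decreases from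
`X(t) = e^{(t-T)/p} x` to `X(T) = y` and stays below `y + p (1 - e^{(s-T)/p})`, its value for
`v ≡ 1`. With the monotonicity of `z (g z - g∞)` this bound gives `g(x/v) - g∞ ≤ ψ(X) (-X')`
pointwise, where `ψ(u) = (g(ζ u) - g∞) p / (p + y - u)` and `ζ u = u p / (p + y - u)`, so the
substitution `u = X(s)` bounds every cost by `(T - t) g∞ + ∫_y^{X(t)} ψ`. The free trajectory on
`[τ, T]` sweeps exactly `[y, X(t)]`, so this bound is the claimed value. Conversely, the control
equal to a small constant on `[t, σ]` and to `1` afterwards, the constant being fixed by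
`x(t) = x`, costs at least `(σ - t) g∞ + ∫_σ^T g(x_p)`, which tends to the value as `σ ↓ τ`.
-/

theorem AntitoneOn.le_of_tendsto_atTop {g : ℝ → ℝ} {a l z : ℝ} (hg : AntitoneOn g (Ioi a))
    (hl : Tendsto g atTop (nhds l)) (hz : a < z) : l ≤ g z :=
  le_of_tendsto hl ((eventually_gt_atTop z).mono fun _ hw => hg hz (hz.trans hw) hw.le)

/-- The substitution `u = c + ∫_s^b m` for a merely integrable `m ≥ 0`, as an inequality: with `Ψ`
a primitive of `φ`, the function `-Ψ (c + ∫_s^b m)` is monotone with derivative `φ (…) * m` almost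
everywhere, and the derivative of a monotone function integrates to at most its increment. -/
theorem integral_comp_primitive_mul_le {φ m : ℝ → ℝ} {U : Set ℝ} {a b c : ℝ} (hab : a ≤ b)
    (hm : IntervalIntegrable m volume a b) (hm0 : ∀ s ∈ Icc a b, 0 ≤ m s)
    (hU : IsOpen U) (hφ : ContinuousOn φ U) (hcU : Icc c (c + ∫ s in a..b, m s) ⊆ U)
    (hφ0 : ∀ u ∈ Icc c (c + ∫ s in a..b, m s), 0 ≤ φ u) :
    ∫ s in a..b, φ (c + ∫ r in s..b, m r) * m s ≤ ∫ u in c..c + ∫ s in a..b, m s, φ u := by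
  set C := c + ∫ s in a..b, m s
  set X : ℝ → ℝ := fun s => c + ∫ r in s..b, m r
  set Ψ : ℝ → ℝ := fun u => ∫ v in c..u, φ v
  have hX_anti : AntitoneOn X (Icc a b) := fun s hs s' hs' hss' =>
    (add_le_add_iff_left c).2 (intervalIntegral.integral_mono_interval hss' hs'.2 le_rfl
      (ae_restrict_of_forall_mem measurableSet_Ioc fun r hr => hm0 r ⟨hs.1.trans hr.1.le, hr.2⟩)
      (hm.mono_set (uIcc_subset_uIcc (Icc_subset_uIcc hs) right_mem_uIcc)))
  have hX_mem : ∀ s ∈ Icc a b, X s ∈ Icc c C := fun s hs =>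
    ⟨by simpa [X] using hX_anti hs (right_mem_Icc.2 hab) hs.2,
      hX_anti (left_mem_Icc.2 hab) hs hs.1⟩
  have hφi : ∀ u ∈ Icc c C, IntervalIntegrable φ volume c u := fun u hu =>
    ContinuousOn.intervalIntegrable
      (hφ.mono (hcU.trans' (uIcc_subset_Icc (left_mem_Icc.2 (hu.1.trans hu.2)) hu)))
  have hΨ_mono : MonotoneOn Ψ (Icc c C) := fun u hu v hv huv =>
    intervalIntegral.integral_mono_interval le_rfl hu.1 huv
      (ae_restrict_of_forall_mem measurableSet_Ioc fun w hw => hφ0 w ⟨hw.1.le, hw.2.trans hv.2⟩)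
      (hφi v hv)
  have hF_mono : MonotoneOn (fun s => -Ψ (X s)) (uIcc a b) := by
    rw [uIcc_of_le hab]
    exact fun s hs s' hs' hss' => neg_le_neg
      (hΨ_mono (hX_mem s' hs') (hX_mem s hs) (hX_anti hs hs' hss'))
  have hF_deriv : ∀ᵐ s, s ∈ uIoc a b → deriv (fun s => -Ψ (X s)) s = φ (X s) * m s := by
    filter_upwards [hm.ae_hasDerivAt_integral] with s hs hsab
    have hs' : s ∈ Icc a b := by rw [← uIcc_of_le hab]; exact uIoc_subset_uIcc hsab
    have hX : HasDerivAt X (-m s) s := by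
      refine ((hs (uIoc_subset_uIcc hsab) b right_mem_uIcc).const_sub c).congr_of_eventuallyEq
        (Eventually.of_forall fun r => ?_)
      simp only [X, intervalIntegral.integral_symm b r]
      ring
    have hΨ : HasDerivAt Ψ (φ (X s)) (X s) :=
      intervalIntegral.integral_hasDerivAt_right (hφi _ (hX_mem s hs'))
        (hφ.stronglyMeasurableAtFilter hU _ (hcU (hX_mem s hs')))
        (hφ.continuousAt (hU.mem_nhds (hcU (hX_mem s hs'))))
    exact (hΨ.comp s hX).neg.deriv.trans (by ring)
  calc ∫ s in a..b, φ (X s) * m s = ∫ s in a..b, deriv (fun s => -Ψ (X s)) s :=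
        intervalIntegral.integral_congr_ae (hF_deriv.mono fun s hs hsab => (hs hsab).symm)
    _ ≤ -Ψ (X b) - -Ψ (X a) := by
        have hd := sub_nonneg.2 (hF_mono left_mem_uIcc right_mem_uIcc hab)
        exact hF_mono.intervalIntegral_deriv_mem_uIcc.2.trans_eq (max_eq_right hd)
    _ = Ψ C := by simp [Ψ, X, C]

namespace ControlValue

noncomputable section

def expWeight (p T s : ℝ) : ℝ := exp ((s - T) / p)

variable {p T : ℝ}

lemma expWeight_pos (s : ℝ) : 0 < expWeight p T s := exp_pos _

@[simp] lemma expWeight_self : expWeight p T T = 1 := by simp [expWeight]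

lemma exp_mul_expWeight (s : ℝ) : exp ((T - s) / p) * expWeight p T s = 1 := by
  rw [expWeight, ← exp_add, ← exp_zero]
  ring_nf

lemma expWeight_strictMono (hp : 0 < p) : StrictMono (expWeight p T) := fun _ _ h =>
  exp_lt_exp.2 (div_lt_div_of_pos_right (by linarith) hp)

lemma expWeight_le_one (hp : 0 < p) {s : ℝ} (hs : s ≤ T) : expWeight p T s ≤ 1 :=
  expWeight_self (p := p) ▸ (expWeight_strictMono hp).monotone hs

lemma continuous_expWeight : Continuous (expWeight p T) := by unfold expWeight; fun_prop

lemma hasDerivAt_expWeight (s : ℝ) : HasDerivAt (expWeight p T) (expWeight p T s / p) s := by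
  have := (((hasDerivAt_id s).sub_const T).div_const p).exp
  simp only [id, one_div, ← div_eq_mul_inv] at this
  exact this

lemma integral_expWeight (hp : 0 < p) (a b : ℝ) :
    ∫ s in a..b, expWeight p T s = p * expWeight p T b - p * expWeight p T a :=
  intervalIntegral.integral_eq_sub_of_hasDerivAt (f := fun s => p * expWeight p T s)
    (fun s _ => ((hasDerivAt_expWeight s).const_mul p).congr_deriv (mul_div_cancel₀ _ hp.ne'))
    (continuous_expWeight.intervalIntegrable _ _)

/-- `scaledTraj p y T v s = e^{(s-T)/p} x(s)` solves `X' = -e^{(s-T)/p} v`, `X(T) = y`. For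
`v ≡ 1` it is `y + p * (1 - expWeight p T s)`, called the free state in the names below. -/
def scaledTraj (p y T : ℝ) (v : ℝ → ℝ) (s : ℝ) : ℝ := y + ∫ r in s..T, expWeight p T r * v r

variable {y : ℝ}

lemma traj_eq_exp_mul_scaledTraj (v : ℝ → ℝ) (s : ℝ) :
    traj p y T v s = exp ((T - s) / p) * scaledTraj p y T v s := by
  rw [traj, scaledTraj, mul_add, ← intervalIntegral.integral_const_mul]
  congr 1
  refine intervalIntegral.integral_congr fun r _ => ?_
  simp only [expWeight, ← mul_assoc, ← exp_add]
  ring_nf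

lemma xpTraj_eq_exp_mul_freeState (s : ℝ) :
    xpTraj p y T s = exp ((T - s) / p) * (y + p * (1 - expWeight p T s)) := by
  rw [xpTraj]
  linear_combination p * exp_mul_expWeight (p := p) (T := T) s

lemma hasDerivAt_freeState (hp : 0 < p) (s : ℝ) :
    HasDerivAt (fun s => y + p * (1 - expWeight p T s)) (-expWeight p T s) s := by
  refine ((((hasDerivAt_expWeight s).const_sub 1).const_mul p).const_add y).congr_deriv ?_
  field_simp

/-- On the free trajectory, the state `u = y + p * (1 - expWeight p T s)` determines
`xpTraj p y T s = zeta p y u`, and `(g (xpTraj p y T s) - ginf) ds = -psi g ginf p y u du`. -/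
def zeta (p y u : ℝ) : ℝ := u * p / (p + y - u)

def psi (g : ℝ → ℝ) (ginf p y u : ℝ) : ℝ := (g (zeta p y u) - ginf) * (p / (p + y - u))

variable {ginf : ℝ} {g : ℝ → ℝ}

lemma zeta_pos (hp : 0 < p) {u : ℝ} (hu : u ∈ Ioo 0 (p + y)) : 0 < zeta p y u :=
  div_pos (mul_pos hu.1 hp) (sub_pos.2 hu.2)

lemma continuousOn_psi (hp : 0 < p) (hgcont : ContinuousOn g (Ioi 0)) :
    ContinuousOn (psi g ginf p y) (Ioo 0 (p + y)) := by
  have hden : ∀ u ∈ Ioo 0 (p + y), p + y - u ≠ 0 := fun u hu => (sub_pos.2 hu.2).ne'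
  have hzeta : ContinuousOn (zeta p y) (Ioo 0 (p + y)) :=
    (continuousOn_id.mul continuousOn_const).div (continuousOn_const.sub continuousOn_id) hden
  exact ((hgcont.comp hzeta fun u hu => zeta_pos hp hu).sub continuousOn_const).mul
    (continuousOn_const.div (continuousOn_const.sub continuousOn_id) hden)

lemma psi_nonneg (hp : 0 < p) (hgdec : AntitoneOn g (Ioi 0)) (hglim : Tendsto g atTop (nhds ginf))
    {u : ℝ} (hu : u ∈ Ioo 0 (p + y)) : 0 ≤ psi g ginf p y u :=
  mul_nonneg (sub_nonneg.2 (hgdec.le_of_tendsto_atTop hglim (zeta_pos hp hu)))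
    (div_pos hp (sub_pos.2 hu.2)).le

lemma sub_le_psi_mul (hp : 0 < p) (hxgdec : AntitoneOn (fun z => z * (g z - ginf)) (Ioi 0))
    {u m : ℝ} (hu : 0 < u) (hm : 0 < m) (hum : p * m ≤ p + y - u) :
    g (u / m) - ginf ≤ psi g ginf p y u * m := by
  have hd : 0 < p + y - u := (mul_pos hp hm).trans_le hum
  have hzeta : zeta p y u ≤ u / m := by
    rw [zeta, div_le_div_iff₀ hd hm]
    nlinarith
  have key := hxgdec (zeta_pos hp ⟨hu, by linarith⟩) (div_pos hu hm) hzeta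
  calc g (u / m) - ginf = u / m * (g (u / m) - ginf) * (m / u) := by field_simp
    _ ≤ zeta p y u * (g (zeta p y u) - ginf) * (m / u) := by gcongr
    _ = psi g ginf p y u * m := by rw [psi, zeta]; field_simp

lemma zeta_freeState (hp : 0 < p) (s : ℝ) :
    zeta p y (y + p * (1 - expWeight p T s)) = xpTraj p y T s := by
  have hw := expWeight_pos (p := p) (T := T) s
  rw [zeta, xpTraj_eq_exp_mul_freeState,
    show p + y - (y + p * (1 - expWeight p T s)) = p * expWeight p T s by ring]
  field_simp
  linear_combination (-(y + p * (1 - expWeight p T s))) * exp_mul_expWeight (p := p) (T := T) s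

lemma psi_freeState_mul_expWeight (hp : 0 < p) (s : ℝ) :
    psi g ginf p y (y + p * (1 - expWeight p T s)) * expWeight p T s
      = g (xpTraj p y T s) - ginf := by
  have hw := expWeight_pos (p := p) (T := T) s
  rw [psi, zeta_freeState hp,
    show p + y - (y + p * (1 - expWeight p T s)) = p * expWeight p T s by ring]
  field_simp

lemma integral_xpTraj_sub (hp : 0 < p) (hy : 0 < y) (hgcont : ContinuousOn g (Ioi 0))
    {τ : ℝ} (hτT : τ ≤ T) :
    ∫ s in τ..T, (g (xpTraj p y T s) - ginf)
      = ∫ u in y..y + p * (1 - expWeight p T τ), psi g ginf p y u := by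
  have himg : (fun s => y + p * (1 - expWeight p T s)) '' uIcc τ T ⊆ Ioo 0 (p + y) := by
    rintro _ ⟨s, hs, rfl⟩
    rw [uIcc_of_le hτT] at hs
    have := expWeight_le_one hp hs.2
    have := expWeight_pos (p := p) (T := T) s
    constructor <;> nlinarith
  have key := intervalIntegral.integral_comp_mul_deriv' (fun s _ => hasDerivAt_freeState hp s)
    continuous_expWeight.neg.continuousOn ((continuousOn_psi (ginf := ginf) hp hgcont).mono himg)
  rw [expWeight_self, sub_self, mul_zero, add_zero] at key
  rw [intervalIntegral.integral_symm _ y, ← key, ← intervalIntegral.integral_neg]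
  refine intervalIntegral.integral_congr fun s _ => ?_
  rw [Function.comp_apply, mul_neg, neg_neg, psi_freeState_mul_expWeight hp]

lemma continuousOn_comp_xpTraj (hp : 0 < p) (hy : 0 < y) (hgcont : ContinuousOn g (Ioi 0)) :
    ContinuousOn (fun s => g (xpTraj p y T s)) (Iic T) :=
  hgcont.comp (by unfold xpTraj; fun_prop) fun s hs => by
    have := one_le_exp (div_nonneg (sub_nonneg.2 (mem_Iic.1 hs)) hp.le)
    rw [mem_Ioi, xpTraj]
    nlinarith

lemma integral_xpTraj (hp : 0 < p) (hy : 0 < y) (hgcont : ContinuousOn g (Ioi 0))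
    {τ : ℝ} (hτT : τ ≤ T) :
    ∫ s in τ..T, g (xpTraj p y T s)
      = (T - τ) * ginf + ∫ u in y..y + p * (1 - expWeight p T τ), psi g ginf p y u := by
  have hint : IntervalIntegrable (fun s => g (xpTraj p y T s)) volume τ T :=
    ((continuousOn_comp_xpTraj hp hy hgcont).mono
      (by rw [uIcc_of_le hτT]; exact Icc_subset_Iic_self)).intervalIntegrable
  rw [← integral_xpTraj_sub hp hy hgcont hτT, intervalIntegral.integral_sub hint
    intervalIntegrable_const, intervalIntegral.integral_const, smul_eq_mul]
  ring

lemma continuousOn_integral_xpTraj (hp : 0 < p) (hy : 0 < y) (hgcont : ContinuousOn g (Ioi 0))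
    {a : ℝ} (haT : a ≤ T) :
    ContinuousOn (fun σ => ∫ s in σ..T, g (xpTraj p y T s)) (Icc a T) := by
  have hint := ((continuousOn_comp_xpTraj hp hy hgcont).mono
    (uIcc_of_le haT ▸ Icc_subset_Iic_self)).integrableOn_uIcc (μ := volume)
  rw [← uIcc_of_le haT]
  exact intervalIntegral.continuousOn_primitive_interval_left hint

variable {t : ℝ} {v : ℝ → ℝ}

lemma traj_div_eq {s : ℝ} (hvs : v s ≠ 0) :
    traj p y T v s / v s = scaledTraj p y T v s / (expWeight p T s * v s) := by
  have hw := (expWeight_pos (p := p) (T := T) s).ne'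
  rw [traj_eq_exp_mul_scaledTraj, div_eq_div_iff hvs (mul_ne_zero hw hvs)]
  linear_combination scaledTraj p y T v s * v s * exp_mul_expWeight (p := p) (T := T) s

lemma intervalIntegrable_expWeight_mul (hp : 0 < p) (htT : t ≤ T) (hvm : Measurable v)
    (hv : ∀ s ∈ Icc t T, 0 < v s ∧ v s ≤ 1) :
    IntervalIntegrable (fun s => expWeight p T s * v s) volume t T := by
  refine (intervalIntegrable_iff_integrableOn_Icc_of_le htT).2
    (Measure.integrableOn_of_bounded (M := 1) measure_Icc_lt_top.ne
      (continuous_expWeight.measurable.mul hvm).aestronglyMeasurable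
      (ae_restrict_of_forall_mem measurableSet_Icc fun s hs => ?_))
  rw [Real.norm_eq_abs, abs_le]
  have := expWeight_pos (p := p) (T := T) s
  have := expWeight_le_one hp hs.2
  have := hv s hs
  constructor <;> nlinarith

lemma scaledTraj_mem_Icc (hp : 0 < p) (hvm : Measurable v)
    (hv : ∀ s ∈ Icc t T, 0 < v s ∧ v s ≤ 1) {s : ℝ} (hs : s ∈ Icc t T) :
    scaledTraj p y T v s ∈ Icc y (scaledTraj p y T v t) := by
  have hm := intervalIntegrable_expWeight_mul hp (hs.1.trans hs.2) hvm hv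
  have hm0 : ∀ r ∈ Icc t T, 0 ≤ expWeight p T r * v r := fun r hr =>
    (mul_pos (expWeight_pos r) (hv r hr).1).le
  refine ⟨le_add_of_nonneg_right (intervalIntegral.integral_nonneg hs.2 fun r hr =>
    hm0 r ⟨hs.1.trans hr.1, hr.2⟩), (add_le_add_iff_left y).2 ?_⟩
  exact intervalIntegral.integral_mono_interval hs.1 hs.2 le_rfl
    (ae_restrict_of_forall_mem measurableSet_Ioc fun r hr => hm0 r ⟨hr.1.le, hr.2⟩) hm

lemma scaledTraj_le_freeState (hp : 0 < p) (hvm : Measurable v)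
    (hv : ∀ s ∈ Icc t T, 0 < v s ∧ v s ≤ 1) {s : ℝ} (hs : s ∈ Icc t T) :
    scaledTraj p y T v s ≤ y + p * (1 - expWeight p T s) := by
  have hle : ∫ r in s..T, expWeight p T r * v r ≤ ∫ r in s..T, expWeight p T r :=
    intervalIntegral.integral_mono_on hs.2
      ((intervalIntegrable_expWeight_mul hp (hs.1.trans hs.2) hvm hv).mono_set
        (uIcc_subset_uIcc (Icc_subset_uIcc hs) right_mem_uIcc))
      (continuous_expWeight.intervalIntegrable _ _) fun r hr =>
        mul_le_of_le_one_right (expWeight_pos r).le (hv r ⟨hs.1.trans hr.1, hr.2⟩).2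
  rw [integral_expWeight hp, expWeight_self] at hle
  rw [scaledTraj]
  linarith

lemma continuousOn_scaledTraj (hp : 0 < p) (htT : t ≤ T) (hvm : Measurable v)
    (hv : ∀ s ∈ Icc t T, 0 < v s ∧ v s ≤ 1) : ContinuousOn (scaledTraj p y T v) (Icc t T) := by
  have hm := (intervalIntegrable_iff_integrableOn_Icc_of_le htT).1
    (intervalIntegrable_expWeight_mul hp htT hvm hv)
  rw [← uIcc_of_le htT] at hm ⊢
  exact continuousOn_const.add (intervalIntegral.continuousOn_primitive_interval_left hm)

lemma le_traj_div (hp : 0 < p) (hy : 0 ≤ y) (hvm : Measurable v)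
    (hv : ∀ s ∈ Icc t T, 0 < v s ∧ v s ≤ 1) {s : ℝ} (hs : s ∈ Icc t T) :
    y ≤ traj p y T v s / v s := by
  obtain ⟨hv0, hv1⟩ := hv s hs
  have hm0 : 0 < expWeight p T s * v s := mul_pos (expWeight_pos s) hv0
  have hm1 : expWeight p T s * v s ≤ 1 := mul_le_one₀ (expWeight_le_one hp hs.2) hv0.le hv1
  have hX := (scaledTraj_mem_Icc (y := y) hp hvm hv hs).1
  rw [traj_div_eq hv0.ne', le_div_iff₀ hm0]
  nlinarith

lemma intervalIntegrable_cost (hp : 0 < p) (hy : 0 < y) (htT : t ≤ T) (hvm : Measurable v)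
    (hv : ∀ s ∈ Icc t T, 0 < v s ∧ v s ≤ 1) (hgcont : ContinuousOn g (Ioi 0))
    (hgdec : AntitoneOn g (Ioi 0)) (hglim : Tendsto g atTop (nhds ginf)) :
    IntervalIntegrable (fun s => g (traj p y T v s / v s)) volume t T := by
  have hle : ∀ s ∈ Icc t T, y ≤ traj p y T v s / v s := fun s hs =>
    le_traj_div hp hy.le hvm hv hs
  have htraj : ContinuousOn (traj p y T v) (Icc t T) :=
    ((continuous_exp.comp (by fun_prop)).continuousOn.mul
      (continuousOn_scaledTraj hp htT hvm hv)).congr fun s _ => traj_eq_exp_mul_scaledTraj v s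
  have hg : Continuous fun z => g (max z y) := hgcont.comp_continuous
    (continuous_id.max continuous_const) fun z => hy.trans_le (le_max_right z y)
  have hmeas : AEStronglyMeasurable (fun s => g (traj p y T v s / v s))
      (volume.restrict (Icc t T)) :=
    ((hg.measurable.comp_aemeasurable ((htraj.aemeasurable measurableSet_Icc).div
      hvm.aemeasurable)).congr (ae_restrict_of_forall_mem measurableSet_Icc fun s hs => by
        simp [max_eq_left (hle s hs)])).aestronglyMeasurable
  refine (intervalIntegrable_iff_integrableOn_Icc_of_le htT).2
    (Integrable.of_bound hmeas (max |g y| |ginf|)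
      (ae_restrict_of_forall_mem measurableSet_Icc fun s hs => ?_))
  have h1 := hgdec hy (hy.trans_le (hle s hs)) (hle s hs)
  have h2 := hgdec.le_of_tendsto_atTop hglim (hy.trans_le (hle s hs))
  rw [Real.norm_eq_abs, abs_le]
  constructor
  · linarith [neg_abs_le ginf, le_max_right |g y| |ginf|]
  · linarith [le_abs_self (g y), le_max_left |g y| |ginf|]

lemma sub_le_psi_scaledTraj_mul (hp : 0 < p) (hy : 0 < y) (hvm : Measurable v)
    (hv : ∀ s ∈ Icc t T, 0 < v s ∧ v s ≤ 1)
    (hxgdec : AntitoneOn (fun z => z * (g z - ginf)) (Ioi 0)) {s : ℝ} (hs : s ∈ Icc t T) :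
    g (traj p y T v s / v s) - ginf
      ≤ psi g ginf p y (scaledTraj p y T v s) * (expWeight p T s * v s) := by
  obtain ⟨hv0, hv1⟩ := hv s hs
  rw [traj_div_eq hv0.ne']
  refine sub_le_psi_mul hp hxgdec (hy.trans_le (scaledTraj_mem_Icc hp hvm hv hs).1)
    (mul_pos (expWeight_pos s) hv0) ?_
  have := scaledTraj_le_freeState (y := y) hp hvm hv hs
  have := mul_le_of_le_one_right (expWeight_pos (p := p) (T := T) s).le hv1
  nlinarith

lemma integral_cost_le (hp : 0 < p) (hy : 0 < y) (htT : t ≤ T) (hvm : Measurable v)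
    (hv : ∀ s ∈ Icc t T, 0 < v s ∧ v s ≤ 1) (hgcont : ContinuousOn g (Ioi 0))
    (hgdec : AntitoneOn g (Ioi 0)) (hglim : Tendsto g atTop (nhds ginf))
    (hxgdec : AntitoneOn (fun z => z * (g z - ginf)) (Ioi 0)) :
    ∫ s in t..T, g (traj p y T v s / v s)
      ≤ (T - t) * ginf + ∫ u in y..scaledTraj p y T v t, psi g ginf p y u := by
  have hm := intervalIntegrable_expWeight_mul hp htT hvm hv
  have hcost := intervalIntegrable_cost hp hy htT hvm hv hgcont hgdec hglim
  have hXt : scaledTraj p y T v t < p + y := by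
    have := scaledTraj_le_freeState (y := y) hp hvm hv (left_mem_Icc.2 htT)
    nlinarith [expWeight_pos (p := p) (T := T) t]
  have hsub : Icc y (scaledTraj p y T v t) ⊆ Ioo 0 (p + y) := fun u hu =>
    ⟨hy.trans_le hu.1, hu.2.trans_lt hXt⟩
  have hpsiX : ContinuousOn (fun s => psi g ginf p y (scaledTraj p y T v s)) (uIcc t T) := by
    rw [uIcc_of_le htT]
    exact (continuousOn_psi hp hgcont).comp (continuousOn_scaledTraj hp htT hvm hv)
      fun s hs => hsub (scaledTraj_mem_Icc hp hvm hv hs)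
  calc ∫ s in t..T, g (traj p y T v s / v s)
      = (∫ s in t..T, (g (traj p y T v s / v s) - ginf)) + (T - t) * ginf := by
        rw [intervalIntegral.integral_sub hcost intervalIntegrable_const,
          intervalIntegral.integral_const, smul_eq_mul]
        ring
    _ ≤ (∫ s in t..T, psi g ginf p y (scaledTraj p y T v s) * (expWeight p T s * v s))
          + (T - t) * ginf := by
        gcongr ?_ + _
        exact intervalIntegral.integral_mono_on htT (hcost.sub intervalIntegrable_const)
          (hm.continuousOn_mul hpsiX) fun s hs =>
            sub_le_psi_scaledTraj_mul hp hy hvm hv hxgdec hs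
    _ ≤ (∫ u in y..scaledTraj p y T v t, psi g ginf p y u) + (T - t) * ginf := by
        gcongr ?_ + _
        exact integral_comp_primitive_mul_le htT hm
          (fun s hs => (mul_pos (expWeight_pos s) (hv s hs).1).le) isOpen_Ioo
          (continuousOn_psi hp hgcont) hsub fun u hu => psi_nonneg hp hgdec hglim (hsub hu)
    _ = _ := add_comm _ _

def switchControl (σ ε s : ℝ) : ℝ := if s ≤ σ then ε else 1

lemma measurable_switchControl (σ ε : ℝ) : Measurable (switchControl σ ε) :=
  Measurable.ite measurableSet_Iic measurable_const measurable_const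

lemma switchControl_mem {σ ε : ℝ} (hε0 : 0 < ε) (hε1 : ε ≤ 1) (s : ℝ) :
    0 < switchControl σ ε s ∧ switchControl σ ε s ≤ 1 := by
  unfold switchControl
  split_ifs <;> constructor <;> linarith

lemma scaledTraj_switchControl_of_le (hp : 0 < p) {σ ε s : ℝ} (hσs : σ ≤ s) (hsT : s ≤ T) :
    scaledTraj p y T (switchControl σ ε) s = y + p * (1 - expWeight p T s) := by
  have : ∫ r in s..T, expWeight p T r * switchControl σ ε r = ∫ r in s..T, expWeight p T r :=
    intervalIntegral.integral_congr_ae (ae_of_all _ fun r hr => by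
      rw [uIoc_of_le hsT] at hr
      simp [switchControl, (hσs.trans_lt hr.1).not_ge])
  rw [scaledTraj, this, integral_expWeight hp, expWeight_self]
  ring

lemma scaledTraj_switchControl_left (hp : 0 < p) {σ ε : ℝ} (hε0 : 0 < ε) (hε1 : ε ≤ 1)
    (htσ : t ≤ σ) (hσT : σ ≤ T) :
    scaledTraj p y T (switchControl σ ε) t
      = y + p * (1 - expWeight p T σ) + ε * (p * expWeight p T σ - p * expWeight p T t) := by
  have hm := intervalIntegrable_expWeight_mul hp (htσ.trans hσT) (measurable_switchControl σ ε)
    fun s _ => switchControl_mem hε0 hε1 s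
  have hright := scaledTraj_switchControl_of_le (y := y) (ε := ε) hp le_rfl hσT
  have hleft : ∫ r in t..σ, expWeight p T r * switchControl σ ε r
      = ε * (p * expWeight p T σ - p * expWeight p T t) := by
    rw [intervalIntegral.integral_congr (g := fun r => ε * expWeight p T r) fun r hr => ?_,
      intervalIntegral.integral_const_mul, integral_expWeight hp]
    rw [uIcc_of_le htσ] at hr
    simp [switchControl, hr.2, mul_comm]
  rw [scaledTraj] at hright ⊢
  rw [← intervalIntegral.integral_add_adjacent_intervals
    (hm.mono_set (uIcc_subset_uIcc left_mem_uIcc (Icc_subset_uIcc ⟨htσ, hσT⟩)))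
    (hm.mono_set (uIcc_subset_uIcc (Icc_subset_uIcc ⟨htσ, hσT⟩) right_mem_uIcc))]
  linarith

lemma integral_cost_switchControl_ge (hp : 0 < p) (hy : 0 < y) {σ ε : ℝ} (hε0 : 0 < ε)
    (hε1 : ε ≤ 1) (htσ : t ≤ σ) (hσT : σ ≤ T) (hgcont : ContinuousOn g (Ioi 0))
    (hgdec : AntitoneOn g (Ioi 0)) (hglim : Tendsto g atTop (nhds ginf)) :
    (σ - t) * ginf + ∫ s in σ..T, g (xpTraj p y T s)
      ≤ ∫ s in t..T, g (traj p y T (switchControl σ ε) s / switchControl σ ε s) := by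
  have hv : ∀ s ∈ Icc t T, 0 < switchControl σ ε s ∧ switchControl σ ε s ≤ 1 :=
    fun s _ => switchControl_mem hε0 hε1 s
  have hcost := intervalIntegrable_cost hp hy (htσ.trans hσT) (measurable_switchControl σ ε) hv
    hgcont hgdec hglim
  have hleft := hcost.mono_set (uIcc_subset_uIcc left_mem_uIcc (Icc_subset_uIcc ⟨htσ, hσT⟩))
  rw [← intervalIntegral.integral_add_adjacent_intervals hleft
    (hcost.mono_set (uIcc_subset_uIcc (Icc_subset_uIcc ⟨htσ, hσT⟩) right_mem_uIcc))]
  gcongr ?_ + ?_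
  · have := intervalIntegral.integral_mono_on htσ intervalIntegrable_const hleft fun s hs =>
      hgdec.le_of_tendsto_atTop hglim (hy.trans_le (le_traj_div hp hy.le
        (measurable_switchControl σ ε) hv ⟨hs.1, hs.2.trans hσT⟩))
    rwa [intervalIntegral.integral_const, smul_eq_mul] at this
  · refine le_of_eq (intervalIntegral.integral_congr_ae (ae_of_all _ fun s hs => ?_))
    rw [uIoc_of_le hσT] at hs
    have hv1 : switchControl σ ε s = 1 := by simp [switchControl, hs.1.not_ge]
    rw [hv1, div_one, traj_eq_exp_mul_scaledTraj, scaledTraj_switchControl_of_le hp hs.1.le hs.2,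
      xpTraj_eq_exp_mul_freeState]

lemma exists_control_integral_cost_ge (hp : 0 < p) (hy : 0 < y) {x τ σ : ℝ} (htτ : t < τ)
    (hτσ : τ < σ) (hσT : σ ≤ T) (hx : x * expWeight p T t = y + p * (1 - expWeight p T τ))
    (hgcont : ContinuousOn g (Ioi 0)) (hgdec : AntitoneOn g (Ioi 0))
    (hglim : Tendsto g atTop (nhds ginf)) :
    ∃ v : ℝ → ℝ, Measurable v ∧ (∀ s ∈ Icc t T, 0 < v s ∧ v s ≤ 1) ∧ traj p y T v t = x ∧
      (σ - t) * ginf + ∫ s in σ..T, g (xpTraj p y T s)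
        ≤ ∫ s in t..T, g (traj p y T v s / v s) := by
  have hw := expWeight_strictMono (p := p) (T := T) hp
  have htσ := hw (htτ.trans hτσ)
  set ε := (expWeight p T σ - expWeight p T τ) / (expWeight p T σ - expWeight p T t)
  have hε0 : 0 < ε := div_pos (sub_pos.2 (hw hτσ)) (sub_pos.2 htσ)
  have hε1 : ε ≤ 1 := (div_le_one (sub_pos.2 htσ)).2 (by linarith [hw htτ])
  refine ⟨switchControl σ ε, measurable_switchControl σ ε, fun s _ => switchControl_mem hε0 hε1 s,
    ?_, integral_cost_switchControl_ge hp hy hε0 hε1 (htτ.trans hτσ).le hσT hgcont hgdec hglim⟩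
  have hε : ε * (p * expWeight p T σ - p * expWeight p T t)
      = p * (expWeight p T σ - expWeight p T τ) := by
    simp only [ε]
    field_simp [(sub_pos.2 htσ).ne']
  rw [traj_eq_exp_mul_scaledTraj, scaledTraj_switchControl_left hp hε0 hε1 (htτ.trans hτσ).le hσT]
  linear_combination exp ((T - t) / p) * hε - exp ((T - t) / p) * hx
    + x * exp_mul_expWeight (p := p) (T := T) t

lemma mul_expWeight_eq_of_exp_eq (hp : 0 < p) {x τ : ℝ}
    (hτ : exp (τ / p) = exp (T / p) * (1 + y / p) - (x / p) * exp (t / p)) :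
    x * expWeight p T t = y + p * (1 - expWeight p T τ) := by
  have hT := exp_pos (T / p)
  simp only [expWeight, sub_div, exp_sub, hτ]
  field_simp
  ring

end

end ControlValue

open ControlValue in
theorem stmt_15_general (p y t T x ginf : ℝ) (hp : 0 < p) (hy : 0 < y) (htT : t < T)
    (g : ℝ → ℝ)
    (hgcont : ContinuousOn g (Set.Ioi 0))
    (hgdec : AntitoneOn g (Set.Ioi 0))
    (hglim : Tendsto g atTop (nhds ginf))
    (hxgdec : AntitoneOn (fun z => z * (g z - ginf)) (Set.Ioi 0))
    (hx1 : Real.exp ((T - t) / p) * y < x)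
    (hx2 : x < Real.exp ((T - t) / p) * (y + p) - p)
    (τ : ℝ)
    (hτ : Real.exp (τ / p)
        = Real.exp (T / p) * (1 + y / p) - (x / p) * Real.exp (t / p)) :
    t < τ ∧ τ < T ∧
    IsLUB {c : ℝ | ∃ v : ℝ → ℝ, Measurable v ∧
        (∀ s ∈ Set.Icc t T, 0 < v s ∧ v s ≤ 1) ∧
        traj p y T v t = x ∧
        c = ∫ s in t..T, g (traj p y T v s / v s)}
      ((τ - t) * ginf + ∫ s in τ..T, g (xpTraj p y T s)) := by
  have hx := mul_expWeight_eq_of_exp_eq hp hτ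
  have hwt := exp_mul_expWeight (p := p) (T := T) t
  have hw := expWeight_strictMono (p := p) (T := T) hp
  have htτ : t < τ := hw.lt_iff_lt.1 <| by
    nlinarith [mul_lt_mul_of_pos_right hx2 (expWeight_pos (p := p) (T := T) t)]
  have hτT : τ < T := hw.lt_iff_lt.1 <| by
    rw [expWeight_self]
    nlinarith [mul_lt_mul_of_pos_right hx1 (expWeight_pos (p := p) (T := T) t)]
  refine ⟨htτ, hτT, ?_, fun b hb => ?_⟩
  · rintro _ ⟨v, hvm, hv, hvx, rfl⟩
    have hX : scaledTraj p y T v t = y + p * (1 - expWeight p T τ) := by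
      rw [← hx, ← hvx, traj_eq_exp_mul_scaledTraj]
      linear_combination (-scaledTraj p y T v t) * hwt
    have := integral_cost_le hp hy htT.le hvm hv hgcont hgdec hglim hxgdec
    rw [hX] at this
    rw [integral_xpTraj (ginf := ginf) hp hy hgcont hτT.le]
    linarith
  · have hval : ContinuousWithinAt (fun σ => (σ - t) * ginf + ∫ s in σ..T, g (xpTraj p y T s))
        (Ioo τ T) τ :=
      ((((continuous_sub_right t).mul continuous_const).continuousOn.add
        (continuousOn_integral_xpTraj hp hy hgcont hτT.le)).continuousWithinAt
          (left_mem_Icc.2 hτT.le)).mono Ioo_subset_Icc_self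
    refine hval.closure_le (closure_Ioo hτT.ne ▸ left_mem_Icc.2 hτT.le) continuousWithinAt_const
      fun σ hσ => ?_
    obtain ⟨v, hvm, hv, hvx, hle⟩ :=
      exists_control_integral_cost_ge hp hy htτ hσ.1 hσ.2.le hx hgcont hgdec hglim
    exact hle.trans (hb ⟨v, hvm, hv, hvx, rfl⟩)

/-- Proposition 7.1: the value of the maximization problem
sup_{0<v≤1, x(t)=x} ∫_t^T g(x(s)/v(s)) ds equals (τ_{x,t}−t)g(∞) + ∫_{τ_{x,t}}^T g(x_p(s)) ds. -/
theorem stmt_15 (p y t T x ginf : ℝ) (hp : 0 < p) (hy : 0 < y) (htT : t < T)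
    (g : ℝ → ℝ)
    (hgcont : ContinuousOn g (Set.Ioi 0))
    (hgnonneg : ∀ z > (0:ℝ), 0 ≤ g z)
    (hgdec : AntitoneOn g (Set.Ioi 0))
    (hglim : Tendsto g atTop (nhds ginf))
    (hxgdec : AntitoneOn (fun z => z * (g z - ginf)) (Set.Ioi 0))
    (hx1 : Real.exp ((T - t) / p) * y < x)
    (hx2 : x < Real.exp ((T - t) / p) * (y + p) - p)
    (τ : ℝ)
    (hτ : Real.exp (τ / p)
        = Real.exp (T / p) * (1 + y / p) - (x / p) * Real.exp (t / p)) :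
    t < τ ∧ τ < T ∧
    IsLUB {c : ℝ | ∃ v : ℝ → ℝ, Measurable v ∧
        (∀ s ∈ Set.Icc t T, 0 < v s ∧ v s ≤ 1) ∧
        traj p y T v t = x ∧
        c = ∫ s in t..T, g (traj p y T v s / v s)}
      ((τ - t) * ginf + ∫ s in τ..T, g (xpTraj p y T s)) :=
  stmt_15_general p y t T x ginf hp hy htT g hgcont hgdec hglim hxgdec hx1 hx2 τ hτ
end

section
/- (Proposition 7.3.) Let p > 0 and let g : (0,∞) → ℝ be continuous, nonnegative and decreasing. Fix y > 0, t < T, and x with e^{(T−t)/p} y < x < e^{(T−t)/p}(y + p) − p, and define τ_{x,t} by e^{τ_{x,t}/p} = e^{T/p}(1 + y/p) − (x/p) e^{t/p}. Then t < τ_{x,t} < T, and the supremum, over all measurable controls v : [t,T] → (0,1] for which the solution x(·) of dx(s)/ds = −x(s)/p − v(s) with x(T) = y satisfies x(t) = x, of ∫_t^T g(x(s)/v(s)) e^{−(T−s)/p} v(s) ds equals ∫_{τ_{x,t}}^T g(x_p(s)) e^{−(T−s)/p} ds, where x_p(s) = e^{(T−s)/p}(y + p) − p. -/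
/-!
In the discounted variable `u(s) = e^{(s-T)/p} x(s)` the dynamics become `u' = -w` with
`w = e^{(s-T)/p} v ≤ e^{(s-T)/p}`, and the payoff density is `g(u/w) w`. Since
`u ≤ y + p - p e^{(s-T)/p}`, one has `u/w ≥ p u / (p + y - u)`, so for `g` decreasing the payoff is
at most `∫ h(u) (-u') ds = ∫_y^{u(t)} h` with `h(r) = g(p r / (p + y - r))`; the substitution is
valid because `u` is Lipschitz. The constraint fixes `u(t) = e^{(t-T)/p} x`. For `v = 1` both
inequalities are equalities, and the free trajectory `x_p` has discounted value `u(t)` exactly at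
time `τ`, so the bound equals `∫_τ^T g(x_p) e^{-(T-s)/p} ds`. It is approached, but not attained,
by controls equal to a constant on `[t, σ]` and to `1` on `[σ, T]`, letting `σ ↓ τ`.
-/

open MeasureTheory Real Filter Set

open scoped NNReal Topology

theorem integral_comp_mul_deriv_of_lipschitzOnWith {u h : ℝ → ℝ} {a b : ℝ} {K : ℝ≥0}
    (hu : LipschitzOnWith K u (uIcc a b)) (hh : Continuous h) :
    ∫ x in a..b, h (u x) * deriv u x = ∫ r in u a..u b, h r := by
  set H : ℝ → ℝ := fun r => ∫ s in u a..r, h s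
  have hH : ∀ r, HasDerivAt H (h r) r := fun r => (hh.integral_hasStrictDerivAt _ _).hasDerivAt
  have hH1 : ContDiff ℝ 1 H := by
    rw [contDiff_one_iff_deriv]
    exact ⟨fun r => (hH r).differentiableAt, by rwa [funext fun r => (hH r).deriv]⟩
  obtain ⟨R, hR⟩ := isCompact_uIcc.exists_bound_of_continuousOn hu.continuousOn
  obtain ⟨L, hL⟩ := hH1.contDiffOn.exists_lipschitzOnWith (s := Icc (-R) R) one_ne_zero
    (convex_Icc _ _) isCompact_Icc
  have hHu : AbsolutelyContinuousOnInterval (H ∘ u) a b :=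
    (hL.comp hu fun x hx => abs_le.1 (hR x hx)).absolutelyContinuousOnInterval
  calc ∫ x in a..b, h (u x) * deriv u x = ∫ x in a..b, deriv (H ∘ u) x := by
        refine intervalIntegral.integral_congr_ae ?_
        filter_upwards [hu.absolutelyContinuousOnInterval.ae_differentiableAt] with x hx hxab
        exact (((hH (u x)).comp x (hx (uIoc_subset_uIcc hxab)).hasDerivAt).deriv).symm
    _ = ∫ r in u a..u b, h r := by simp [hHu.integral_deriv_eq_sub, H]

theorem integral_comp_mul_deriv_of_lipschitzOnWith_of_continuousOn {u h : ℝ → ℝ} {a b m M : ℝ}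
    {K : ℝ≥0} (hu : LipschitzOnWith K u (uIcc a b)) (hh : ContinuousOn h (Icc m M))
    (hmaps : MapsTo u (uIcc a b) (Icc m M)) :
    ∫ x in a..b, h (u x) * deriv u x = ∫ r in u a..u b, h r := by
  have hmM : m ≤ M := (hmaps left_mem_uIcc).1.trans (hmaps left_mem_uIcc).2
  set h' : ℝ → ℝ := fun r => h (projIcc m M hmM r)
  have hh' : Continuous h' := hh.comp_continuous (continuous_subtype_val.comp continuous_projIcc)
    fun r => (projIcc m M hmM r).2
  have heq : EqOn h' h (Icc m M) := fun r hr => by simp [h', projIcc_of_mem hmM hr]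
  calc ∫ x in a..b, h (u x) * deriv u x = ∫ x in a..b, h' (u x) * deriv u x :=
        intervalIntegral.integral_congr fun x hx => by rw [heq (hmaps hx)]
    _ = ∫ r in u a..u b, h' r := integral_comp_mul_deriv_of_lipschitzOnWith hu hh'
    _ = ∫ r in u a..u b, h r := intervalIntegral.integral_congr
        (heq.mono (uIcc_subset_Icc (hmaps left_mem_uIcc) (hmaps right_mem_uIcc)))

theorem integral_exp_sub_div {p : ℝ} (hp : p ≠ 0) (a b c : ℝ) :
    ∫ s in a..b, exp ((s - c) / p) = p * (exp ((b - c) / p) - exp ((a - c) / p)) := by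
  have hderiv (s : ℝ) : HasDerivAt (fun s => p * exp ((s - c) / p)) (exp ((s - c) / p)) s := by
    refine ((((hasDerivAt_id' s).sub_const c).div_const p).exp.const_mul p).congr_deriv ?_
    field_simp
  rw [intervalIntegral.integral_eq_sub_of_hasDerivAt (fun s _ => hderiv s)
    ((by fun_prop : Continuous fun s => exp ((s - c) / p)).intervalIntegrable _ _)]
  ring

theorem exp_sub_div_strictMono {p : ℝ} (hp : 0 < p) (T : ℝ) :
    StrictMono fun s => exp ((s - T) / p) :=
  fun _ _ h => exp_lt_exp.2 (div_lt_div_of_pos_right (sub_lt_sub_right h T) hp)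

-- `e^{(s-T)/p} x(s)`: the trajectory discounted to time `T`, which decreases to `y` at the rate
-- `e^{(s-T)/p} v(s)`.
noncomputable def discountedTraj (p y T : ℝ) (v : ℝ → ℝ) (s : ℝ) : ℝ :=
  y + ∫ s' in s..T, exp ((s' - T) / p) * v s'

theorem traj_eq_exp_mul_discountedTraj (p y T : ℝ) (v : ℝ → ℝ) (s : ℝ) :
    traj p y T v s = exp ((T - s) / p) * discountedTraj p y T v s := by
  rw [traj, discountedTraj, mul_add, ← intervalIntegral.integral_const_mul]
  congr 1
  refine intervalIntegral.integral_congr fun s' _ => ?_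
  simp only [← mul_assoc, ← exp_add]
  ring_nf

section discountedTraj

variable {p y T a : ℝ} {v : ℝ → ℝ}

theorem discountedTraj_self : discountedTraj p y T v T = y := by simp [discountedTraj]

theorem exp_sub_div_le_one (hp : 0 < p) {s : ℝ} (hs : s ≤ T) : exp ((s - T) / p) ≤ 1 :=
  exp_le_one_iff.2 (div_nonpos_of_nonpos_of_nonneg (sub_nonpos.2 hs) hp.le)

theorem exp_mul_mem_Icc (hp : 0 < p) (hv01 : MapsTo v (Icc a T) (Icc 0 1)) {s : ℝ}
    (hs : s ∈ Icc a T) : exp ((s - T) / p) * v s ∈ Icc 0 1 :=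
  ⟨mul_nonneg (exp_pos _).le (hv01 hs).1,
    mul_le_one₀ (exp_sub_div_le_one hp hs.2) (hv01 hs).1 (hv01 hs).2⟩

theorem intervalIntegrable_exp_mul (hp : 0 < p) (hv : Measurable v)
    (hv01 : MapsTo v (Icc a T) (Icc 0 1)) (haT : a ≤ T) :
    IntervalIntegrable (fun s => exp ((s - T) / p) * v s) volume a T := by
  rw [intervalIntegrable_iff_integrableOn_Icc_of_le haT]
  refine Integrable.mono' (integrable_const 1) (by fun_prop) ?_
  refine (ae_restrict_iff' measurableSet_Icc).2 (ae_of_all _ fun s hs => ?_)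
  have hw := exp_mul_mem_Icc hp hv01 hs
  rw [Real.norm_eq_abs, abs_of_nonneg hw.1]
  exact hw.2

theorem discountedTraj_sub (hp : 0 < p) (hv : Measurable v)
    (hv01 : MapsTo v (Icc a T) (Icc 0 1)) {s₁ s₂ : ℝ} (hs₁ : s₁ ∈ Icc a T) (hs₂ : s₂ ∈ Icc a T) :
    discountedTraj p y T v s₁ - discountedTraj p y T v s₂
      = ∫ s in s₁..s₂, exp ((s - T) / p) * v s := by
  have hint := intervalIntegrable_exp_mul hp hv hv01 (hs₁.1.trans hs₁.2)
  have hmem {s} (hs : s ∈ Icc a T) : s ∈ uIcc a T := Icc_subset_uIcc hs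
  rw [discountedTraj, discountedTraj, ← intervalIntegral.integral_add_adjacent_intervals
    (hint.mono_set (uIcc_subset_uIcc (hmem hs₁) (hmem hs₂)))
    (hint.mono_set (uIcc_subset_uIcc (hmem hs₂) right_mem_uIcc))]
  ring

theorem lipschitzOnWith_discountedTraj (hp : 0 < p) (hv : Measurable v)
    (hv01 : MapsTo v (Icc a T) (Icc 0 1)) :
    LipschitzOnWith 1 (discountedTraj p y T v) (Icc a T) := by
  refine LipschitzOnWith.of_dist_le_mul fun s₁ hs₁ s₂ hs₂ => ?_
  rw [dist_eq_norm, discountedTraj_sub hp hv hv01 hs₁ hs₂, NNReal.coe_one,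
    Real.dist_eq, abs_sub_comm]
  refine intervalIntegral.norm_integral_le_of_norm_le_const fun s hs => ?_
  have hs' : s ∈ Icc a T := (uIcc_subset_Icc hs₁ hs₂) (uIoc_subset_uIcc hs)
  have hw := exp_mul_mem_Icc hp hv01 hs'
  rw [Real.norm_eq_abs, abs_of_nonneg hw.1]
  exact hw.2

theorem ae_hasDerivAt_discountedTraj (hp : 0 < p) (hv : Measurable v)
    (hv01 : MapsTo v (Icc a T) (Icc 0 1)) (haT : a ≤ T) :
    ∀ᵐ s, s ∈ uIcc a T →
      HasDerivAt (discountedTraj p y T v) (-(exp ((s - T) / p) * v s)) s := by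
  filter_upwards [(intervalIntegrable_exp_mul hp hv hv01 haT).ae_hasDerivAt_integral]
    with s hs hsmem
  have hu : discountedTraj p y T v = fun r => y - ∫ s' in T..r, exp ((s' - T) / p) * v s' := by
    funext r
    rw [discountedTraj, intervalIntegral.integral_symm, sub_eq_add_neg]
  rw [hu]
  exact (hs hsmem T right_mem_uIcc).const_sub y

theorem antitoneOn_discountedTraj (hp : 0 < p) (hv : Measurable v)
    (hv01 : MapsTo v (Icc a T) (Icc 0 1)) :
    AntitoneOn (discountedTraj p y T v) (Icc a T) := by
  intro s₁ hs₁ s₂ hs₂ h12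
  have hsub := discountedTraj_sub (y := y) hp hv hv01 hs₁ hs₂
  have hnonneg : 0 ≤ ∫ s in s₁..s₂, exp ((s - T) / p) * v s :=
    intervalIntegral.integral_nonneg h12 fun s hs =>
      (exp_mul_mem_Icc hp hv01 ⟨hs₁.1.trans hs.1, hs.2.trans hs₂.2⟩).1
  linarith

theorem le_discountedTraj (hp : 0 < p) (hv : Measurable v)
    (hv01 : MapsTo v (Icc a T) (Icc 0 1)) {s : ℝ} (hs : s ∈ Icc a T) :
    y ≤ discountedTraj p y T v s := by
  simpa [discountedTraj_self] using
    antitoneOn_discountedTraj (y := y) hp hv hv01 hs ⟨hs.1.trans hs.2, le_rfl⟩ hs.2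

theorem discountedTraj_le (hp : 0 < p) (hv : Measurable v)
    (hv01 : MapsTo v (Icc a T) (Icc 0 1)) {s : ℝ} (hs : s ∈ Icc a T) :
    discountedTraj p y T v s ≤ y + p - p * exp ((s - T) / p) := by
  have hint := intervalIntegrable_exp_mul hp hv hv01 (hs.1.trans hs.2)
  have hle : ∫ s' in s..T, exp ((s' - T) / p) * v s' ≤ ∫ s' in s..T, exp ((s' - T) / p) :=
    intervalIntegral.integral_mono_on hs.2
      (hint.mono_set (uIcc_subset_uIcc (Icc_subset_uIcc hs) right_mem_uIcc))
      ((by fun_prop : Continuous fun s' => exp ((s' - T) / p)).intervalIntegrable _ _)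
      fun s' hs' => mul_le_of_le_one_right (exp_pos _).le (hv01 ⟨hs.1.trans hs'.1, hs'.2⟩).2
  rw [integral_exp_sub_div hp.ne', sub_self, zero_div, exp_zero] at hle
  rw [discountedTraj]
  linarith

theorem discountedTraj_of_eqOn_one (hp : p ≠ 0) {s : ℝ} (hs : s ≤ T) (hv1 : EqOn v 1 (Ioc s T)) :
    discountedTraj p y T v s = y + p - p * exp ((s - T) / p) := by
  have hcongr : ∫ s' in s..T, exp ((s' - T) / p) * v s' = ∫ s' in s..T, exp ((s' - T) / p) := by
    refine intervalIntegral.integral_congr_ae (ae_of_all _ fun s' hs' => ?_)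
    rw [uIoc_of_le hs] at hs'
    simp [hv1 hs']
  rw [discountedTraj, hcongr, integral_exp_sub_div hp, sub_self, zero_div, exp_zero]
  ring

theorem traj_eq_xpTraj_of_eqOn_one (hp : p ≠ 0) {s : ℝ} (hs : s ≤ T)
    (hv1 : EqOn v 1 (Ioc s T)) : traj p y T v s = xpTraj p y T s := by
  have hexp : exp ((T - s) / p) * exp ((s - T) / p) = 1 := by
    rw [← exp_add, show (T - s) / p + (s - T) / p = 0 by ring, exp_zero]
  rw [traj_eq_exp_mul_discountedTraj, discountedTraj_of_eqOn_one hp hs hv1, xpTraj]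
  linear_combination (-p) * hexp

end discountedTraj

-- Bounds `g (x(s) / v(s))` when `e^{(s-T)/p} x(s) = r`: then
-- `x(s) / v(s) ≥ x(s) ≥ p r / (p + y - r)` because `r ≤ y + p - p e^{(s-T)/p}`.
noncomputable def upperDensity (g : ℝ → ℝ) (p y r : ℝ) : ℝ := g (p * r / (p + y - r))

noncomputable def payoffRate (g : ℝ → ℝ) (p y T : ℝ) (v : ℝ → ℝ) (s : ℝ) : ℝ :=
  g (traj p y T v s / v s) * exp (-(T - s) / p) * v s

section payoff

variable {g : ℝ → ℝ} {p y T a : ℝ} {v : ℝ → ℝ}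

theorem continuousOn_upperDensity (hp : 0 < p) (hg : ContinuousOn g (Ioi 0)) :
    ContinuousOn (upperDensity g p y) (Ioo 0 (p + y)) := by
  refine hg.comp (by fun_prop (disch := intro r hr; linarith [hr.2])) fun r hr => ?_
  exact div_pos (mul_pos hp hr.1) (by linarith [hr.2])

theorem payoffRate_le_upperDensity_mul (hp : 0 < p) (hg : AntitoneOn g (Ioi 0)) {s : ℝ}
    (hv0 : 0 < v s) (hv1 : v s ≤ 1) (hu0 : 0 < discountedTraj p y T v s)
    (hu : discountedTraj p y T v s ≤ y + p - p * exp ((s - T) / p)) :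
    payoffRate g p y T v s
      ≤ upperDensity g p y (discountedTraj p y T v s) * (exp ((s - T) / p) * v s) := by
  set u := discountedTraj p y T v s
  set E := exp ((s - T) / p)
  have hE : 0 < E := exp_pos _
  have htraj : traj p y T v s = u / E := by
    rw [traj_eq_exp_mul_discountedTraj, show (T - s) / p = -((s - T) / p) by ring, exp_neg,
      inv_mul_eq_div]
  have hden : p * (E * v s) ≤ p + y - u := by
    nlinarith [mul_le_mul_of_nonneg_left hv1 (mul_pos hp hE).le]
  have harg : p * u / (p + y - u) ≤ u / E / v s := by
    rw [div_div, ← mul_div_mul_left u (E * v s) hp.ne']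
    exact div_le_div_of_nonneg_left (mul_pos hp hu0).le (mul_pos hp (mul_pos hE hv0)) hden
  rw [payoffRate, htraj, neg_div, ← neg_div, neg_sub, upperDensity, mul_assoc]
  refine mul_le_mul_of_nonneg_right (hg ?_ ?_ harg) (mul_pos hE hv0).le
  · exact div_pos (mul_pos hp hu0) ((mul_pos hp (mul_pos hE hv0)).trans_le hden)
  · exact div_pos (div_pos hu0 hE) hv0

theorem le_traj_div (hp : 0 < p) (hy : 0 ≤ y) (hv : Measurable v)
    (hv01 : ∀ s ∈ Icc a T, 0 < v s ∧ v s ≤ 1) {s : ℝ} (hs : s ∈ Icc a T) :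
    y ≤ traj p y T v s / v s := by
  have hv01' : MapsTo v (Icc a T) (Icc 0 1) := fun s hs => ⟨(hv01 s hs).1.le, (hv01 s hs).2⟩
  have hu := le_discountedTraj (y := y) hp hv hv01' hs
  have hexp : 1 ≤ exp ((T - s) / p) := one_le_exp (div_nonneg (sub_nonneg.2 hs.2) hp.le)
  rw [traj_eq_exp_mul_discountedTraj]
  have htraj : y ≤ exp ((T - s) / p) * discountedTraj p y T v s := by nlinarith
  exact htraj.trans (le_div_self (hy.trans htraj) (hv01 s hs).1 (hv01 s hs).2)

theorem intervalIntegrable_payoffRate (hp : 0 < p) (hy : 0 < y) (hgc : ContinuousOn g (Ioi 0))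
    (hg0 : ∀ z > 0, 0 ≤ g z) (hgd : AntitoneOn g (Ioi 0)) (hv : Measurable v)
    (hv01 : ∀ s ∈ Icc a T, 0 < v s ∧ v s ≤ 1) (haT : a ≤ T) :
    IntervalIntegrable (payoffRate g p y T v) volume a T := by
  have hv01' : MapsTo v (Icc a T) (Icc 0 1) := fun s hs => ⟨(hv01 s hs).1.le, (hv01 s hs).2⟩
  have hlow {s} (hs : s ∈ Icc a T) := le_traj_div hp hy.le hv hv01 hs
  -- on `Icc a T` the argument of `g` is at least `y`, so `g` may be replaced by a continuous map
  have heq : EqOn (payoffRate g p y T v)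
      (fun s => g (max (traj p y T v s / v s) y) * exp (-(T - s) / p) * v s) (Icc a T) :=
    fun s hs => by simp only [payoffRate, max_eq_left (hlow hs)]
  have hgmax : Continuous fun z => g (max z y) :=
    hgc.comp_continuous (by fun_prop) fun z => hy.trans_le (le_max_right _ _)
  have htraj : ContinuousOn (traj p y T v) (Icc a T) := by
    rw [funext (traj_eq_exp_mul_discountedTraj p y T v)]
    exact (by fun_prop : Continuous fun s => exp ((T - s) / p)).continuousOn.mul
      (lipschitzOnWith_discountedTraj hp hv hv01').continuousOn
  rw [intervalIntegrable_iff_integrableOn_Icc_of_le haT]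
  refine IntegrableOn.congr_fun ?_ heq.symm measurableSet_Icc
  refine Integrable.mono' (integrable_const (g y)) ?_ ?_
  · refine (((hgmax.measurable.comp_aemeasurable ?_).mul (by fun_prop)).mul
      hv.aemeasurable).aestronglyMeasurable
    exact (htraj.aemeasurable measurableSet_Icc).div hv.aemeasurable
  refine (ae_restrict_iff' measurableSet_Icc).2 (ae_of_all _ fun s hs => ?_)
  have hgz : g (max (traj p y T v s / v s) y) ≤ g y :=
    hgd (mem_Ioi.2 hy) (mem_Ioi.2 (hy.trans_le (le_max_right _ _))) (le_max_right _ _)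
  have hgz0 := hg0 _ (hy.trans_le (le_max_right (traj p y T v s / v s) y))
  have hE : exp (-(T - s) / p) ≤ 1 := by
    rw [neg_div, ← neg_div, neg_sub]; exact exp_sub_div_le_one hp hs.2
  rw [Real.norm_eq_abs, abs_of_nonneg (by have := (hv01 s hs).1; positivity)]
  calc _ ≤ g y * 1 * 1 := mul_le_mul (mul_le_mul hgz hE (exp_pos _).le (hg0 y hy))
        (hv01 s hs).2 (hv01 s hs).1.le (by simpa using hg0 y hy)
    _ = g y := by ring

end payoff

section value

variable {g : ℝ → ℝ} {p y T a : ℝ} {v : ℝ → ℝ}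

theorem integral_upperDensity_mul_eq (hp : 0 < p) (hy : 0 < y) (hgc : ContinuousOn g (Ioi 0))
    (hv : Measurable v) (hv01 : MapsTo v (Icc a T) (Icc 0 1)) (haT : a ≤ T) :
    ∫ s in a..T, upperDensity g p y (discountedTraj p y T v s) * (exp ((s - T) / p) * v s)
      = ∫ r in y..discountedTraj p y T v a, upperDensity g p y r := by
  set u := discountedTraj p y T v
  have ha : a ∈ Icc a T := ⟨le_rfl, haT⟩
  have hua : u a < p + y := by
    linarith [discountedTraj_le (y := y) hp hv hv01 ha, mul_pos hp (exp_pos ((a - T) / p))]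
  have hmaps : MapsTo u (uIcc a T) (Icc y (u a)) := fun s hs => by
    rw [uIcc_of_le haT] at hs
    exact ⟨le_discountedTraj hp hv hv01 hs, antitoneOn_discountedTraj hp hv hv01 ha hs hs.1⟩
  have hcont : ContinuousOn (upperDensity g p y) (Icc y (u a)) :=
    (continuousOn_upperDensity hp hgc).mono (Icc_subset_Ioo hy hua)
  have hlip : LipschitzOnWith 1 u (uIcc a T) := by
    rw [uIcc_of_le haT]; exact lipschitzOnWith_discountedTraj hp hv hv01
  calc ∫ s in a..T, upperDensity g p y (u s) * (exp ((s - T) / p) * v s)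
      = -∫ s in a..T, upperDensity g p y (u s) * deriv u s := by
        rw [← intervalIntegral.integral_neg]
        refine intervalIntegral.integral_congr_ae ?_
        filter_upwards [ae_hasDerivAt_discountedTraj hp hv hv01 haT] with s hs hsmem
        rw [(hs (uIoc_subset_uIcc hsmem)).deriv]
        ring
    _ = -∫ r in u a..u T, upperDensity g p y r := by
        rw [integral_comp_mul_deriv_of_lipschitzOnWith_of_continuousOn hlip hcont hmaps]
    _ = ∫ r in y..u a, upperDensity g p y r := by
        rw [show u T = y from discountedTraj_self, intervalIntegral.integral_symm, neg_neg]

theorem integral_payoffRate_le (hp : 0 < p) (hy : 0 < y) (hgc : ContinuousOn g (Ioi 0))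
    (hg0 : ∀ z > 0, 0 ≤ g z) (hgd : AntitoneOn g (Ioi 0)) (hv : Measurable v)
    (hv01 : ∀ s ∈ Icc a T, 0 < v s ∧ v s ≤ 1) (haT : a ≤ T) :
    ∫ s in a..T, payoffRate g p y T v s
      ≤ ∫ r in y..discountedTraj p y T v a, upperDensity g p y r := by
  have hv01' : MapsTo v (Icc a T) (Icc 0 1) := fun s hs => ⟨(hv01 s hs).1.le, (hv01 s hs).2⟩
  rw [← integral_upperDensity_mul_eq hp hy hgc hv hv01' haT]
  refine intervalIntegral.integral_mono_on haT
    (intervalIntegrable_payoffRate hp hy hgc hg0 hgd hv hv01 haT) ?_ fun s hs =>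
      payoffRate_le_upperDensity_mul hp hgd (hv01 s hs).1 (hv01 s hs).2
        (hy.trans_le (le_discountedTraj hp hv hv01' hs)) (discountedTraj_le hp hv hv01' hs)
  have ha : a ∈ Icc a T := ⟨le_rfl, haT⟩
  have hcont :
      ContinuousOn (fun s => upperDensity g p y (discountedTraj p y T v s)) (uIcc a T) := by
    rw [uIcc_of_le haT]
    refine (continuousOn_upperDensity hp hgc).comp
      (lipschitzOnWith_discountedTraj hp hv hv01').continuousOn fun s hs => ⟨?_, ?_⟩
    · exact hy.trans_le (le_discountedTraj hp hv hv01' hs)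
    · linarith [discountedTraj_le (y := y) hp hv hv01' hs, mul_pos hp (exp_pos ((s - T) / p))]
  exact (intervalIntegrable_exp_mul hp hv hv01' haT).continuousOn_mul hcont

theorem integral_xpTraj_eq (hp : 0 < p) (hy : 0 < y) (hgc : ContinuousOn g (Ioi 0)) {τ : ℝ}
    (hτT : τ ≤ T) :
    ∫ s in τ..T, g (xpTraj p y T s) * exp (-(T - s) / p)
      = ∫ r in y..(y + p - p * exp ((τ - T) / p)), upperDensity g p y r := by
  have hone {s : ℝ} (hs : s ≤ T) :
      discountedTraj p y T (fun _ => 1) s = y + p - p * exp ((s - T) / p) :=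
    discountedTraj_of_eqOn_one hp.ne' hs fun _ _ => rfl
  rw [← hone hτT, ← integral_upperDensity_mul_eq hp hy hgc measurable_const
    (fun _ _ => ⟨zero_le_one, le_rfl⟩) hτT]
  refine intervalIntegral.integral_congr fun s hs => ?_
  rw [uIcc_of_le hτT] at hs
  have hexp : exp ((T - s) / p) * exp ((s - T) / p) = 1 := by
    rw [← exp_add, show (T - s) / p + (s - T) / p = 0 by ring, exp_zero]
  have harg : p * (y + p - p * exp ((s - T) / p)) / (p + y - (y + p - p * exp ((s - T) / p)))
      = xpTraj p y T s := by
    rw [show p + y - (y + p - p * exp ((s - T) / p)) = p * exp ((s - T) / p) by ring, xpTraj,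
      div_eq_iff (by positivity)]
    linear_combination (-(p * (y + p))) * hexp
  simp only [upperDensity, hone hs.2, harg, mul_one, neg_sub]

end value

section control

variable {g : ℝ → ℝ} {p y T : ℝ}

noncomputable def stepControl (c σ s : ℝ) : ℝ := if s ≤ σ then c else 1

theorem measurable_stepControl (c σ : ℝ) : Measurable (stepControl c σ) :=
  Measurable.ite measurableSet_Iic measurable_const measurable_const

theorem stepControl_mem {c : ℝ} (hc : c ∈ Ioc 0 1) (σ s : ℝ) : stepControl c σ s ∈ Ioc 0 1 := by
  unfold stepControl
  split_ifs
  exacts [hc, ⟨one_pos, le_rfl⟩]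

theorem discountedTraj_stepControl (hp : 0 < p) {c t σ : ℝ} (hc : c ∈ Ioc 0 1) (htσ : t ≤ σ)
    (hσT : σ ≤ T) :
    discountedTraj p y T (stepControl c σ) t
      = y + p - p * exp ((σ - T) / p) + c * p * (exp ((σ - T) / p) - exp ((t - T) / p)) := by
  have hv01 : MapsTo (stepControl c σ) (Icc t T) (Icc 0 1) := fun s _ =>
    Ioc_subset_Icc_self (stepControl_mem hc σ s)
  have hσ : discountedTraj p y T (stepControl c σ) σ = y + p - p * exp ((σ - T) / p) :=
    discountedTraj_of_eqOn_one hp.ne' hσT fun s hs => if_neg (not_le.2 hs.1)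
  have hcongr : ∫ s in t..σ, exp ((s - T) / p) * stepControl c σ s
      = ∫ s in t..σ, c * exp ((s - T) / p) := by
    refine intervalIntegral.integral_congr_ae (ae_of_all _ fun s hs => ?_)
    rw [uIoc_of_le htσ] at hs
    rw [stepControl, if_pos hs.2, mul_comm]
  have hsub := discountedTraj_sub (y := y) hp (measurable_stepControl c σ) hv01
    ⟨le_rfl, htσ.trans hσT⟩ ⟨htσ, hσT⟩
  rw [hcongr, intervalIntegral.integral_const_mul, integral_exp_sub_div hp.ne'] at hsub
  linarith

theorem payoffRate_nonneg (hp : 0 < p) (hy : 0 < y) (hg0 : ∀ z > 0, 0 ≤ g z) {a : ℝ}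
    {v : ℝ → ℝ} (hv : Measurable v) (hv01 : ∀ s ∈ Icc a T, 0 < v s ∧ v s ≤ 1) {s : ℝ}
    (hs : s ∈ Icc a T) : 0 ≤ payoffRate g p y T v s :=
  mul_nonneg (mul_nonneg (hg0 _ (hy.trans_le (le_traj_div hp hy.le hv hv01 hs)))
    (exp_pos _).le) (hv01 s hs).1.le

theorem exists_control_le_integral_payoffRate (hp : 0 < p) (hy : 0 < y)
    (hgc : ContinuousOn g (Ioi 0)) (hg0 : ∀ z > 0, 0 ≤ g z) (hgd : AntitoneOn g (Ioi 0))
    {t τ σ x : ℝ} (hτ : p * exp ((τ - T) / p) = p + y - exp ((t - T) / p) * x)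
    (htτ : t < τ) (hτσ : τ < σ) (hσT : σ ≤ T) :
    ∃ v : ℝ → ℝ, Measurable v ∧ (∀ s ∈ Icc t T, 0 < v s ∧ v s ≤ 1) ∧ traj p y T v t = x ∧
      ∫ s in σ..T, g (xpTraj p y T s) * exp (-(T - s) / p)
        ≤ ∫ s in t..T, payoffRate g p y T v s := by
  have hE := exp_sub_div_strictMono hp T
  have htσ : t < σ := htτ.trans hτσ
  have hEtσ : 0 < exp ((σ - T) / p) - exp ((t - T) / p) := sub_pos.2 (hE htσ)
  -- the constant level on `[t, σ]` that steers the state from `x` at time `t` onto `x_p`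
  set c := (exp ((σ - T) / p) - exp ((τ - T) / p)) / (exp ((σ - T) / p) - exp ((t - T) / p))
  have hc : c ∈ Ioc 0 1 :=
    ⟨div_pos (sub_pos.2 (hE hτσ)) hEtσ, (div_le_one hEtσ).2 (by linarith [hE htτ])⟩
  have hv01 : ∀ s ∈ Icc t T, 0 < stepControl c σ s ∧ stepControl c σ s ≤ 1 :=
    fun s _ => stepControl_mem hc σ s
  refine ⟨stepControl c σ, measurable_stepControl c σ, hv01, ?_, ?_⟩
  · have hcE : c * (exp ((σ - T) / p) - exp ((t - T) / p))
        = exp ((σ - T) / p) - exp ((τ - T) / p) := div_mul_cancel₀ _ hEtσ.ne'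
    have hexp : exp ((T - t) / p) * exp ((t - T) / p) = 1 := by
      rw [← exp_add, show (T - t) / p + (t - T) / p = 0 by ring, exp_zero]
    rw [traj_eq_exp_mul_discountedTraj, discountedTraj_stepControl hp hc htσ.le hσT]
    linear_combination (p * exp ((T - t) / p)) * hcE - exp ((T - t) / p) * hτ + x * hexp
  · have hpay : ∫ s in σ..T, g (xpTraj p y T s) * exp (-(T - s) / p)
        = ∫ s in σ..T, payoffRate g p y T (stepControl c σ) s := by
      refine intervalIntegral.integral_congr_ae (ae_of_all _ fun s hs => ?_)
      rw [uIoc_of_le hσT] at hs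
      have hone : EqOn (stepControl c σ) 1 (Ioc s T) := fun s' hs' =>
        if_neg (not_le.2 (hs.1.trans hs'.1))
      rw [payoffRate, traj_eq_xpTraj_of_eqOn_one hp.ne' hs.2 hone,
        show stepControl c σ s = 1 from if_neg (not_le.2 hs.1), div_one, mul_one]
    rw [hpay]
    refine intervalIntegral.integral_mono_interval htσ.le hσT le_rfl ?_
      (intervalIntegrable_payoffRate hp hy hgc hg0 hgd (measurable_stepControl c σ) hv01
        (htσ.le.trans hσT))
    exact (ae_restrict_iff' measurableSet_Ioc).2 (ae_of_all _ fun s hs =>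
      payoffRate_nonneg hp hy hg0 (measurable_stepControl c σ) hv01 (Ioc_subset_Icc_self hs))

end control

section xpTraj

variable {g : ℝ → ℝ} {p y T : ℝ}

theorem le_xpTraj (hp : 0 < p) (hy : 0 ≤ y) {s : ℝ} (hs : s ≤ T) : y ≤ xpTraj p y T s := by
  have := one_le_exp (div_nonneg (sub_nonneg.2 hs) hp.le)
  rw [xpTraj]
  nlinarith

theorem tendsto_integral_xpTraj (hp : 0 < p) (hy : 0 < y) (hgc : ContinuousOn g (Ioi 0))
    {τ : ℝ} (hτT : τ < T) :
    Tendsto (fun σ => ∫ s in σ..T, g (xpTraj p y T s) * exp (-(T - s) / p)) (𝓝[>] τ)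
      (𝓝 (∫ s in τ..T, g (xpTraj p y T s) * exp (-(T - s) / p))) := by
  have hcont : ContinuousOn (fun s => g (xpTraj p y T s) * exp (-(T - s) / p)) (uIcc τ T) := by
    refine (hgc.comp (by unfold xpTraj; fun_prop) fun s hs => ?_).mul (by fun_prop)
    rw [uIcc_of_le hτT.le] at hs
    exact hy.trans_le (le_xpTraj hp hy.le hs.2)
  refine ((intervalIntegral.continuousOn_primitive_interval_left
    (hcont.integrableOn_compact isCompact_uIcc)).continuousWithinAt left_mem_uIcc
    |>.mono_of_mem_nhdsWithin ?_).tendsto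
  exact mem_of_superset (Ioo_mem_nhdsGT hτT) (Ioo_subset_Icc_self.trans Icc_subset_uIcc)

end xpTraj

theorem tau_mem_Ioo {p y t T x τ : ℝ} (hp : 0 < p) (hx1 : exp ((T - t) / p) * y < x)
    (hx2 : x < exp ((T - t) / p) * (y + p) - p)
    (hτ : p * exp ((τ - T) / p) = p + y - exp ((t - T) / p) * x) : t < τ ∧ τ < T := by
  have hE := exp_sub_div_strictMono hp T
  have hexp : exp ((t - T) / p) * exp ((T - t) / p) = 1 := by
    rw [← exp_add, show (t - T) / p + (T - t) / p = 0 by ring, exp_zero]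
  have hy : y < exp ((t - T) / p) * x := by
    have := mul_lt_mul_of_pos_left hx1 (exp_pos ((t - T) / p))
    rwa [← mul_assoc, hexp, one_mul] at this
  have hyp : exp ((t - T) / p) * x < y + p - p * exp ((t - T) / p) := by
    have := mul_lt_mul_of_pos_left hx2 (exp_pos ((t - T) / p))
    rw [mul_sub, ← mul_assoc, hexp, one_mul] at this
    linarith
  refine ⟨hE.lt_iff_lt.1 (lt_of_mul_lt_mul_left ?_ hp.le),
    hE.lt_iff_lt.1 (lt_of_mul_lt_mul_left ?_ hp.le)⟩
  · linarith
  · simp only [sub_self, zero_div, exp_zero]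
    linarith

theorem stmt_17_general (p y t T x : ℝ) (hp : 0 < p) (hy : 0 < y)
    (g : ℝ → ℝ)
    (hgcont : ContinuousOn g (Set.Ioi 0))
    (hgnonneg : ∀ z > (0:ℝ), 0 ≤ g z)
    (hgdec : AntitoneOn g (Set.Ioi 0))
    (hx1 : Real.exp ((T - t) / p) * y < x)
    (hx2 : x < Real.exp ((T - t) / p) * (y + p) - p)
    (τ : ℝ)
    (hτ : Real.exp (τ / p)
        = Real.exp (T / p) * (1 + y / p) - (x / p) * Real.exp (t / p)) :
    t < τ ∧ τ < T ∧
    IsLUB {c : ℝ | ∃ v : ℝ → ℝ, Measurable v ∧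
        (∀ s ∈ Set.Icc t T, 0 < v s ∧ v s ≤ 1) ∧
        traj p y T v t = x ∧
        c = ∫ s in t..T, g (traj p y T v s / v s) * Real.exp (-(T - s) / p) * v s}
      (∫ s in τ..T, g (xpTraj p y T s) * Real.exp (-(T - s) / p)) := by
  have hτ' : p * exp ((τ - T) / p) = p + y - exp ((t - T) / p) * x := by
    rw [sub_div, exp_sub, hτ, sub_div t, exp_sub]
    field_simp
  obtain ⟨htτ, hτT⟩ := tau_mem_Ioo hp hx1 hx2 hτ'
  have hvalue : ∫ s in τ..T, g (xpTraj p y T s) * exp (-(T - s) / p)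
      = ∫ r in y..exp ((t - T) / p) * x, upperDensity g p y r := by
    rw [integral_xpTraj_eq hp hy hgcont hτT.le]
    congr 1
    linarith
  refine ⟨htτ, hτT, ?_, fun b hb => ?_⟩
  · rintro _ ⟨v, hv, hv01, hvt, rfl⟩
    have hu : discountedTraj p y T v t = exp ((t - T) / p) * x := by
      rw [← hvt, traj_eq_exp_mul_discountedTraj, ← mul_assoc, ← exp_add,
        show (t - T) / p + (T - t) / p = 0 by ring, exp_zero, one_mul]
    rw [hvalue, ← hu]
    exact integral_payoffRate_le hp hy hgcont hgnonneg hgdec hv hv01 (htτ.trans hτT).le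
  · refine le_of_tendsto (tendsto_integral_xpTraj hp hy hgcont hτT) ?_
    filter_upwards [Ioo_mem_nhdsGT hτT] with σ hσ
    obtain ⟨v, hv, hv01, hvt, hle⟩ := exists_control_le_integral_payoffRate hp hy hgcont
      hgnonneg hgdec hτ' htτ hσ.1 hσ.2.le
    exact hle.trans (hb ⟨v, hv, hv01, hvt, rfl⟩)

/-- Proposition 7.3: the value of the maximization problem
sup_{0<v≤1, x(t)=x} ∫_t^T g(x(s)/v(s)) e^{−(T−s)/p} v(s) ds equals
∫_{τ_{x,t}}^T g(x_p(s)) e^{−(T−s)/p} ds. -/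
theorem stmt_17 (p y t T x : ℝ) (hp : 0 < p) (hy : 0 < y) (htT : t < T)
    (g : ℝ → ℝ)
    (hgcont : ContinuousOn g (Set.Ioi 0))
    (hgnonneg : ∀ z > (0:ℝ), 0 ≤ g z)
    (hgdec : AntitoneOn g (Set.Ioi 0))
    (hx1 : Real.exp ((T - t) / p) * y < x)
    (hx2 : x < Real.exp ((T - t) / p) * (y + p) - p)
    (τ : ℝ)
    (hτ : Real.exp (τ / p)
        = Real.exp (T / p) * (1 + y / p) - (x / p) * Real.exp (t / p)) :
    t < τ ∧ τ < T ∧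
    IsLUB {c : ℝ | ∃ v : ℝ → ℝ, Measurable v ∧
        (∀ s ∈ Set.Icc t T, 0 < v s ∧ v s ≤ 1) ∧
        traj p y T v t = x ∧
        c = ∫ s in t..T, g (traj p y T v s / v s) * Real.exp (-(T - s) / p) * v s}
      (∫ s in τ..T, g (xpTraj p y T s) * Real.exp (-(T - s) / p)) :=
  stmt_17_general p y t T x hp hy g hgcont hgnonneg hgdec hx1 hx2 τ hτ
end
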